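/- arXiv:2507.09206 — 5 statements merged into one kernel-verified Lean document; each statement's English description precedes it below -/
import Mathlib

section
/- Let K : ℝ^d × ℝ^d → ℝ be a bounded Borel measurable symmetric kernel that is Lipschitz with constant C_K > 0, i.e. |K(x,y) − K(x',y')| ≤ C_K(|x − x'| + |y − y'|) for all x, x', y, y' ∈ ℝ^d. Let μ, ν be Borel probability measures on ℝ^d and let T*, T̃ : ℝ^d → ℝ^d be Borel measurable maps with ∫ |T̃(x) − T*(x)| μ(dx) < ∞ and T*♯μ = ν. Then γ²_K(T̃♯μ, ν) ≤ 4 C_K ∫ |T̃(x) − T*(x)| μ(dx). -/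
open MeasureTheory

/-- The squared maximum mean discrepancy
`γ²_K(μ,ν) = ∫∫ K dμ dμ − 2 ∫∫ K dμ dν + ∫∫ K dν dν`. -/
noncomputable def mmdSq {d : ℕ} (K : EuclideanSpace ℝ (Fin d) → EuclideanSpace ℝ (Fin d) → ℝ)
    (μ ν : Measure (EuclideanSpace ℝ (Fin d))) : ℝ :=
  (∫ x, ∫ y, K x y ∂μ ∂μ) - 2 * (∫ x, ∫ y, K x y ∂ν ∂μ) + ∫ x, ∫ y, K x y ∂ν ∂ν

/-! Both measures are images of `μ`, so by change of variables the MMD is a single integral over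
`μ ⊗ μ` of `K(S x, S y) − 2 K(S x, T y) + K(T x, T y)`. Splitting this as
`(K(S x, S y) − K(S x, T y)) + (K(T x, T y) − K(S x, T y))`, each bracket changes only one
argument of `K`, so the Lipschitz bound controls it by `C_K ‖S y − T y‖`, resp. `C_K ‖S x − T x‖`;
integrating gives `γ²_K ≤ 2 C_K ∫ ‖S − T‖ dμ`. -/

section Kernel

variable {E : Type*} {K : E → E → ℝ}

theorem sub_two_mul_add_le_of_lipschitz [SeminormedAddCommGroup E] {CK : ℝ}
    (hKlip : ∀ x x' y y', |K x y - K x' y'| ≤ CK * (‖x - x'‖ + ‖y - y'‖)) (x x' y y' : E) :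
    K x y - 2 * K x y' + K x' y' ≤ CK * (‖y - y'‖ + ‖x - x'‖) := by
  have hy := (abs_le.mp (hKlip x x y y')).2
  have hx := (abs_le.mp (hKlip x' x y' y')).2
  rw [sub_self, norm_zero, zero_add] at hy
  rw [sub_self, norm_zero, add_zero, norm_sub_rev] at hx
  linarith

theorem continuous_uncurry_of_lipschitz [SeminormedAddCommGroup E] {CK : ℝ}
    (hKlip : ∀ x x' y y', |K x y - K x' y'| ≤ CK * (‖x - x'‖ + ‖y - y'‖)) :
    Continuous (Function.uncurry K) :=
  (LipschitzWith.uncurry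
    (fun y => LipschitzWith.of_dist_le' fun x x' => by
      simpa [Real.dist_eq, dist_eq_norm] using hKlip x x' y y)
    (fun x => LipschitzWith.of_dist_le' fun y y' => by
      simpa [Real.dist_eq, dist_eq_norm] using hKlip x x y y')).continuous

variable [MeasurableSpace E] {C : ℝ}

theorem integrable_kernel_comp {β : Type*} [MeasurableSpace β] {ρ : Measure β}
    [IsFiniteMeasure ρ] (hK : Measurable (Function.uncurry K)) (hC : ∀ x y, |K x y| ≤ C)
    {f g : β → E} (hf : Measurable f) (hg : Measurable g) :
    Integrable (fun b => K (f b) (g b)) ρ :=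
  .of_bound (hK.comp (hf.prodMk hg)).aestronglyMeasurable C (ae_of_all _ fun _ => hC _ _)

variable {α : Type*} [MeasurableSpace α] (μ : Measure α) [IsFiniteMeasure μ] {S T : α → E}

theorem integrable_kernel_comp_prod (hK : Measurable (Function.uncurry K))
    (hC : ∀ x y, |K x y| ≤ C) (hS : Measurable S) (hT : Measurable T) :
    Integrable (fun p : α × α => K (S p.1) (T p.2)) (μ.prod μ) :=
  integrable_kernel_comp hK hC (hS.comp measurable_fst) (hT.comp measurable_snd)

theorem integral_integral_map_map (hK : Measurable (Function.uncurry K))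
    (hC : ∀ x y, |K x y| ≤ C) (hS : Measurable S) (hT : Measurable T) :
    ∫ x, ∫ y, K x y ∂(μ.map T) ∂(μ.map S) = ∫ p, K (S p.1) (T p.2) ∂(μ.prod μ) := by
  rw [← integral_prod _ (integrable_kernel_comp hK hC measurable_fst measurable_snd),
    Measure.map_prod_map μ μ hS hT]
  exact integral_map (hS.prodMap hT).aemeasurable hK.aestronglyMeasurable

end Kernel

section MMD

variable {d : ℕ} {K : EuclideanSpace ℝ (Fin d) → EuclideanSpace ℝ (Fin d) → ℝ} {C CK : ℝ}
  {α : Type*} [MeasurableSpace α] (μ : Measure α) {S T : α → EuclideanSpace ℝ (Fin d)}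

theorem mmdSq_map_map [IsFiniteMeasure μ] (hK : Measurable (Function.uncurry K))
    (hC : ∀ x y, |K x y| ≤ C) (hS : Measurable S) (hT : Measurable T) :
    mmdSq K (μ.map S) (μ.map T) =
      ∫ p, (K (S p.1) (S p.2) - 2 * K (S p.1) (T p.2) + K (T p.1) (T p.2)) ∂(μ.prod μ) := by
  have hSS := integrable_kernel_comp_prod μ hK hC hS hS
  have hST := integrable_kernel_comp_prod μ hK hC hS hT
  have hTT := integrable_kernel_comp_prod μ hK hC hT hT
  rw [mmdSq, integral_integral_map_map μ hK hC hS hS, integral_integral_map_map μ hK hC hS hT,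
    integral_integral_map_map μ hK hC hT hT, integral_add _ hTT, integral_sub hSS (hST.const_mul 2), integral_const_mul]
  exact hSS.sub (hST.const_mul 2)

theorem mmdSq_map_le [IsProbabilityMeasure μ] (hC : ∀ x y, |K x y| ≤ C)
    (hKlip : ∀ x x' y y', |K x y - K x' y'| ≤ CK * (‖x - x'‖ + ‖y - y'‖))
    (hS : Measurable S) (hT : Measurable T) (hnorm : Integrable (fun x => ‖S x - T x‖) μ) :
    mmdSq K (μ.map S) (μ.map T) ≤ 2 * CK * ∫ x, ‖S x - T x‖ ∂μ := by
  have hK := (continuous_uncurry_of_lipschitz hKlip).measurable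
  have hSS := integrable_kernel_comp_prod μ hK hC hS hS
  have hST := integrable_kernel_comp_prod μ hK hC hS hT
  have hTT := integrable_kernel_comp_prod μ hK hC hT hT
  rw [mmdSq_map_map μ hK hC hS hT]
  calc _ ≤ ∫ p, CK * (‖S p.2 - T p.2‖ + ‖S p.1 - T p.1‖) ∂(μ.prod μ) :=
        integral_mono ((hSS.sub (hST.const_mul 2)).add hTT)
          (((hnorm.comp_snd μ).add (hnorm.comp_fst μ)).const_mul CK)
          fun p => sub_two_mul_add_le_of_lipschitz hKlip _ _ _ _
    _ = 2 * CK * ∫ x, ‖S x - T x‖ ∂μ := by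
      rw [integral_const_mul, integral_add (hnorm.comp_snd μ) (hnorm.comp_fst μ),
        integral_fun_snd (fun x => ‖S x - T x‖), integral_fun_fst (fun x => ‖S x - T x‖)]
      simp only [probReal_univ, one_smul]
      ring

end MMD

theorem stmt_8_general (d : ℕ)
    (K : EuclideanSpace ℝ (Fin d) → EuclideanSpace ℝ (Fin d) → ℝ)
    (hKbdd : ∃ C, ∀ x y, |K x y| ≤ C)
    (CK : ℝ)
    (hKlip : ∀ x x' y y', |K x y - K x' y'| ≤ CK * (‖x - x'‖ + ‖y - y'‖))
    (μ ν : Measure (EuclideanSpace ℝ (Fin d)))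
    [IsProbabilityMeasure μ]
    (Tstar Ttilde : EuclideanSpace ℝ (Fin d) → EuclideanSpace ℝ (Fin d))
    (hTstar : Measurable Tstar) (hTtilde : Measurable Ttilde)
    (hdiff : Integrable (fun x => ‖Ttilde x - Tstar x‖) μ)
    (hpush : Measure.map Tstar μ = ν) :
    mmdSq K (Measure.map Ttilde μ) ν ≤ 4 * CK * ∫ x, ‖Ttilde x - Tstar x‖ ∂μ := by
  obtain ⟨C, hC⟩ := hKbdd
  -- `0 ≤ |K x y - K x y'| ≤ CK * ‖y - y'‖`
  have hCK : 0 ≤ CK * ∫ x, ‖Ttilde x - Tstar x‖ ∂μ := by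
    rw [← integral_const_mul]
    refine integral_nonneg fun x => ?_
    simpa using (abs_nonneg _).trans (hKlip (Ttilde x) (Ttilde x) (Ttilde x) (Tstar x))
  calc mmdSq K (Measure.map Ttilde μ) ν ≤ 2 * CK * ∫ x, ‖Ttilde x - Tstar x‖ ∂μ :=
        hpush ▸ mmdSq_map_le μ hC hKlip hTtilde hTstar hdiff
    _ ≤ 4 * CK * ∫ x, ‖Ttilde x - Tstar x‖ ∂μ := by linarith

/-- If `K` is a bounded Borel symmetric kernel, Lipschitz with constant `C_K`, and
`T*♯μ = ν`, then `γ²_K(T̃♯μ, ν) ≤ 4 C_K ∫ ‖T̃ x − T* x‖ μ(dx)`. -/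
theorem stmt_8 (d : ℕ)
    (K : EuclideanSpace ℝ (Fin d) → EuclideanSpace ℝ (Fin d) → ℝ)
    (hKm : Measurable (Function.uncurry K))
    (hKbdd : ∃ C, ∀ x y, |K x y| ≤ C)
    (hKsymm : ∀ x y, K x y = K y x)
    (CK : ℝ) (hCK : 0 < CK)
    (hKlip : ∀ x x' y y', |K x y - K x' y'| ≤ CK * (‖x - x'‖ + ‖y - y'‖))
    (μ ν : Measure (EuclideanSpace ℝ (Fin d)))
    [IsProbabilityMeasure μ] [IsProbabilityMeasure ν]
    (Tstar Ttilde : EuclideanSpace ℝ (Fin d) → EuclideanSpace ℝ (Fin d))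
    (hTstar : Measurable Tstar) (hTtilde : Measurable Ttilde)
    (hdiff : Integrable (fun x => ‖Ttilde x - Tstar x‖) μ)
    (hpush : Measure.map Tstar μ = ν) :
    mmdSq K (Measure.map Ttilde μ) ν ≤ 4 * CK * ∫ x, ‖Ttilde x - Tstar x‖ ∂μ :=
  stmt_8_general d K hKbdd CK hKlip μ ν Tstar Ttilde hTstar hTtilde hdiff hpush
end

section
/- Let N ≥ 2 and let μ_1, …, μ_N be Borel probability measures on ℝ^d with ∫ |x|² μ_i(dx) < ∞ for all i. Let K : ℝ^d × ℝ^d → ℝ be a bounded Borel measurable symmetric kernel that is Lipschitz with constant C_K > 0, i.e. |K(x,y) − K(x',y')| ≤ C_K(|x − x'| + |y − y'|) for all x, x', y, y'. Let S ⊆ L²(μ_1; ℝ^d) be a dense subset of the space of Borel maps ℝ^d → ℝ^d square-integrable with respect to μ_1 (with the L²(μ_1) norm). Suppose there exist Borel maps T*_2, …, T*_N : ℝ^d → ℝ^d with T*_i ∈ L²(μ_1; ℝ^d) and T*_i♯μ_1 = μ_i for i = 2, …, N, and set T*_1 := id. Then for every λ = (λ_2, …, λ_N) with λ_i > 0, inf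 { M_λ(T) : T = (T_1, …, T_N), T_1 = id, T_i ∈ S for i = 2, …, N } ≤ M(T*), where T* = (id, T*_2, …, T*_N). -/
open MeasureTheory

/-- The multi-marginal transport cost `M(T) = ∫ ∑_{i<j} ‖T_i x − T_j x‖² μ₁(dx)`. -/
noncomputable def transportCost {d N : ℕ} (μ1 : Measure (EuclideanSpace ℝ (Fin d)))
    (T : Fin N → EuclideanSpace ℝ (Fin d) → EuclideanSpace ℝ (Fin d)) : ℝ :=
  ∫ x, ∑ i : Fin N, ∑ j : Fin N, (if i < j then ‖T i x - T j x‖ ^ 2 else 0) ∂μ1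

/-- The penalized cost `M_λ(T) = M(T) + ∑_{i≠1} λ_i γ²_K(T_i♯μ₁, μ_i)`
(the first marginal has index `0`). -/
noncomputable def penalizedCost {d N : ℕ} [NeZero N]
    (K : EuclideanSpace ℝ (Fin d) → EuclideanSpace ℝ (Fin d) → ℝ)
    (μ : Fin N → Measure (EuclideanSpace ℝ (Fin d))) (lam : Fin N → ℝ)
    (T : Fin N → EuclideanSpace ℝ (Fin d) → EuclideanSpace ℝ (Fin d)) : ℝ :=
  transportCost (μ 0) T +
    ∑ i ∈ Finset.univ \ {0}, lam i * mmdSq K (Measure.map (T i) (μ 0)) (μ i)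

private lemma aux_int_bdd {α : Type*} [MeasurableSpace α] {μ : Measure α} [IsFiniteMeasure μ]
    {f : α → ℝ} (hf : AEStronglyMeasurable f μ) {C : ℝ} (hC : ∀ x, |f x| ≤ C) :
    Integrable f μ :=
  Integrable.mono' (integrable_const C) hf (ae_of_all _ fun x => (Real.norm_eq_abs _) ▸ hC x)

private lemma aux_map {α β : Type*} [MeasurableSpace α] [MeasurableSpace β]
    (μ0 : Measure α) [IsProbabilityMeasure μ0] (K : β → β → ℝ)
    (hKm : Measurable (Function.uncurry K)) {φ ψ : α → β} (hφ : Measurable φ)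
    (hψ : Measurable ψ) :
    (∫ x, ∫ y, K x y ∂(Measure.map ψ μ0) ∂(Measure.map φ μ0)) =
      ∫ x, ∫ y, K (φ x) (ψ y) ∂μ0 ∂μ0 := by
  haveI : IsProbabilityMeasure (Measure.map ψ μ0) := Measure.isProbabilityMeasure_map hψ.aemeasurable
  have hsm : StronglyMeasurable (fun x : β => ∫ y, K x y ∂(Measure.map ψ μ0)) :=
    (hKm.stronglyMeasurable).integral_prod_right'
  rw [integral_map hφ.aemeasurable hsm.aestronglyMeasurable]
  refine integral_congr_ae (ae_of_all _ fun x => ?_)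
  exact integral_map hψ.aemeasurable
    ((hKm.comp measurable_prodMk_left).stronglyMeasurable.aestronglyMeasurable)

private lemma aux_mmd {d : ℕ} (μ0 : Measure (EuclideanSpace ℝ (Fin d)))
    [IsProbabilityMeasure μ0]
    (K : EuclideanSpace ℝ (Fin d) → EuclideanSpace ℝ (Fin d) → ℝ)
    (hKm : Measurable (Function.uncurry K)) (C : ℝ) (hC : ∀ x y, |K x y| ≤ C)
    (CK : ℝ) (hKlip : ∀ x x' y y', |K x y - K x' y'| ≤ CK * (‖x - x'‖ + ‖y - y'‖))
    (g f : EuclideanSpace ℝ (Fin d) → EuclideanSpace ℝ (Fin d))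
    (hg : Measurable g) (hf : Measurable f)
    (hI : Integrable (fun x => ‖g x - f x‖) μ0) :
    mmdSq K (Measure.map g μ0) (Measure.map f μ0) ≤ 2 * CK * ∫ x, ‖g x - f x‖ ∂μ0 := by
  -- inner pointwise integrability
  have hinner : ∀ (b : EuclideanSpace ℝ (Fin d)) (ψ : EuclideanSpace ℝ (Fin d) → EuclideanSpace ℝ (Fin d)),
      Measurable ψ → Integrable (fun y => K b (ψ y)) μ0 := fun b ψ hψ =>
    aux_int_bdd (((hKm.comp measurable_prodMk_left).comp hψ).aestronglyMeasurable)
      (fun y => hC b (ψ y))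
  -- outer integrability
  have hout : ∀ (φ ψ : EuclideanSpace ℝ (Fin d) → EuclideanSpace ℝ (Fin d)),
      Measurable φ → Measurable ψ →
      Integrable (fun x => ∫ y, K (φ x) (ψ y) ∂μ0) μ0 := by
    intro φ ψ hφ hψ
    have hm : StronglyMeasurable fun x => ∫ y, K (φ x) (ψ y) ∂μ0 :=
      StronglyMeasurable.integral_prod_right'
        (f := fun p => K (φ p.1) (ψ p.2))
        ((hKm.comp ((hφ.comp measurable_fst).prodMk (hψ.comp measurable_snd))).stronglyMeasurable)
    refine aux_int_bdd hm.aestronglyMeasurable (C := C) (fun x => ?_)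
    rw [← Real.norm_eq_abs]
    calc ‖∫ y, K (φ x) (ψ y) ∂μ0‖ ≤ C * (μ0 Set.univ).toReal :=
          norm_integral_le_of_norm_le_const (ae_of_all _ fun y => by
            rw [Real.norm_eq_abs]; exact hC _ _)
      _ = C := by simp
  rw [mmdSq, aux_map μ0 K hKm hg hg, aux_map μ0 K hKm hg hf, aux_map μ0 K hKm hf hf]
  set I := ∫ x, ‖g x - f x‖ ∂μ0 with hIdef
  have h1 : (∫ x, ∫ y, K (g x) (g y) ∂μ0 ∂μ0) - (∫ x, ∫ y, K (g x) (f y) ∂μ0 ∂μ0)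
      ≤ CK * I := by
    rw [← integral_sub (hout g g hg hg) (hout g f hg hf)]
    have hb : ∀ x, (∫ y, K (g x) (g y) ∂μ0) - (∫ y, K (g x) (f y) ∂μ0) ≤ CK * I := by
      intro x
      rw [← integral_sub (hinner _ g hg) (hinner _ f hf), hIdef, ← integral_const_mul]
      refine integral_mono ((hinner _ g hg).sub (hinner _ f hf)) (hI.const_mul CK) fun y => ?_
      have := hKlip (g x) (g x) (g y) (f y)
      simp only [sub_self, norm_zero, zero_add] at this
      exact (le_abs_self _).trans this
    calc (∫ x, ((∫ y, K (g x) (g y) ∂μ0) - ∫ y, K (g x) (f y) ∂μ0) ∂μ0)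
        ≤ ∫ _x, CK * I ∂μ0 :=
          integral_mono ((hout g g hg hg).sub (hout g f hg hf)) (integrable_const _) hb
      _ = CK * I := by simp
  have h2 : (∫ x, ∫ y, K (f x) (f y) ∂μ0 ∂μ0) - (∫ x, ∫ y, K (g x) (f y) ∂μ0 ∂μ0)
      ≤ CK * I := by
    rw [← integral_sub (hout f f hf hf) (hout g f hg hf), hIdef, ← integral_const_mul]
    refine integral_mono ((hout f f hf hf).sub (hout g f hg hf)) (hI.const_mul CK) fun x => ?_
    rw [← integral_sub (hinner _ f hf) (hinner _ f hf)]
    calc (∫ y, (K (f x) (f y) - K (g x) (f y)) ∂μ0)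
        ≤ ∫ _y, CK * ‖g x - f x‖ ∂μ0 := by
          refine integral_mono ((hinner _ f hf).sub (hinner _ f hf)) (integrable_const _)
            fun y => ?_
          have h := hKlip (f x) (g x) (f y) (f y)
          simp only [sub_self, norm_zero, add_zero] at h
          refine (le_abs_self _).trans (h.trans ?_)
          rw [norm_sub_rev]
      _ = CK * ‖g x - f x‖ := by simp
  linarith [h1, h2]

private lemma aux_sqint {d : ℕ} (μ0 : Measure (EuclideanSpace ℝ (Fin d)))
    [IsProbabilityMeasure μ0] {F G : EuclideanSpace ℝ (Fin d) → EuclideanSpace ℝ (Fin d)}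
    (hF : MemLp F 2 μ0) (hG : MemLp G 2 μ0) :
    Integrable (fun x => ‖F x - G x‖ ^ 2) μ0 := by
  have h := hF.sub hG
  have := (memLp_two_iff_integrable_sq_norm h.aestronglyMeasurable).mp h
  simpa [Pi.sub_apply] using this

private lemma aux_tc {d N : ℕ} (μ0 : Measure (EuclideanSpace ℝ (Fin d)))
    [IsProbabilityMeasure μ0]
    (R : Fin N → EuclideanSpace ℝ (Fin d) → EuclideanSpace ℝ (Fin d))
    (hR : ∀ i, MemLp (R i) 2 μ0) :
    transportCost μ0 R =
      ∑ i : Fin N, ∑ j : Fin N, if i < j then ∫ x, ‖R i x - R j x‖ ^ 2 ∂μ0 else 0 := by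
  have hint : ∀ i j : Fin N,
      Integrable (fun x => if i < j then ‖R i x - R j x‖ ^ 2 else 0) μ0 := by
    intro i j
    split_ifs with h
    · exact aux_sqint μ0 (hR i) (hR j)
    · exact integrable_zero _ _ _
  rw [transportCost, integral_finset_sum _
    (fun i _ => integrable_finset_sum _ (fun j _ => hint i j))]
  refine Finset.sum_congr rfl fun i _ => ?_
  rw [integral_finset_sum _ (fun j _ => hint i j)]
  refine Finset.sum_congr rfl fun j _ => ?_
  split_ifs with h
  · rfl
  · simp

private lemma aux_sq {η s t p q : ℝ} (hη : 0 < η) (hs : 0 ≤ s) (ht : 0 ≤ t) (hp : 0 ≤ p)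
    (hq : 0 ≤ q) (h : s ≤ t + p + q) :
    s ^ 2 ≤ (1 + η) * t ^ 2 + (1 + 1/η) * (2 * p ^ 2 + 2 * q ^ 2) := by
  have key : s ^ 2 * η ≤ η * ((1 + η) * t ^ 2) + (η + 1) * (2 * p ^ 2 + 2 * q ^ 2) := by
    nlinarith [sq_nonneg (η * t - (p + q)), mul_nonneg hη.le (sq_nonneg (p - q)), sq_nonneg (p - q),
      mul_le_mul h h hs (by linarith : (0:ℝ) ≤ t + p + q), mul_pos hη hη,
      mul_nonneg (mul_nonneg hη.le ht) (add_nonneg hp hq), sq_nonneg (p + q),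
      mul_nonneg hp hq]
  have h2 : s ^ 2 ≤ (η * ((1 + η) * t ^ 2) + (η + 1) * (2 * p ^ 2 + 2 * q ^ 2)) / η := by
    rw [le_div_iff₀ hη]; linarith
  have h3 : (η * ((1 + η) * t ^ 2) + (η + 1) * (2 * p ^ 2 + 2 * q ^ 2)) / η
      = (1 + η) * t ^ 2 + (1 + 1/η) * (2 * p ^ 2 + 2 * q ^ 2) := by
    field_simp
  linarith [h3 ▸ h2]

private lemma aux_amgm {η t : ℝ} (hη : 0 < η) (ht : 0 ≤ t) : t ≤ η/2 + t^2/(2*η) := by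
  rw [div_add_div _ _ (two_ne_zero) (by positivity : (2:ℝ)*η ≠ 0), le_div_iff₀ (by positivity)]
  nlinarith [sq_nonneg (t - η)]

private lemma aux_dbl_bound {α : Type*} [MeasurableSpace α] (μ' ν' : Measure α)
    [IsProbabilityMeasure μ'] [IsProbabilityMeasure ν'] (K : α → α → ℝ) (C : ℝ)
    (hC : ∀ x y, |K x y| ≤ C) : |∫ x, ∫ y, K x y ∂ν' ∂μ'| ≤ C := by
  rw [← Real.norm_eq_abs]
  have h1 : ∀ x, ‖∫ y, K x y ∂ν'‖ ≤ C := fun x => by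
    calc ‖∫ y, K x y ∂ν'‖ ≤ C * (ν' Set.univ).toReal :=
          norm_integral_le_of_norm_le_const (ae_of_all _ fun y => by
            rw [Real.norm_eq_abs]; exact hC x y)
      _ = C := by simp
  calc ‖∫ x, ∫ y, K x y ∂ν' ∂μ'‖ ≤ C * (μ' Set.univ).toReal :=
        norm_integral_le_of_norm_le_const (ae_of_all _ h1)
    _ = C := by simp

set_option maxHeartbeats 2000000 in
/-- With a dense subset `S ⊆ L²(μ₁; ℝ^d)` of transport map candidates, and an
exact transport tuple `T*` in `L²(μ₁)`, for every positive weight vector `λ` the infimum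
of the penalized cost over tuples from `S` is at most `M(T*)`. -/
theorem stmt_10 (d N : ℕ) [NeZero N] (hN : 2 ≤ N)
    (μ : Fin N → Measure (EuclideanSpace ℝ (Fin d)))
    [∀ i, IsProbabilityMeasure (μ i)]
    (hmom : ∀ i, Integrable (fun x => ‖x‖ ^ 2) (μ i))
    (K : EuclideanSpace ℝ (Fin d) → EuclideanSpace ℝ (Fin d) → ℝ)
    (hKm : Measurable (Function.uncurry K))
    (hKbdd : ∃ C, ∀ x y, |K x y| ≤ C)
    (hKsymm : ∀ x y, K x y = K y x)
    (CK : ℝ) (hCK : 0 < CK)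
    (hKlip : ∀ x x' y y', |K x y - K x' y'| ≤ CK * (‖x - x'‖ + ‖y - y'‖))
    (S : Set (EuclideanSpace ℝ (Fin d) → EuclideanSpace ℝ (Fin d)))
    (hSmeas : ∀ f ∈ S, Measurable f)
    (hSL2 : ∀ f ∈ S, MemLp f 2 (μ 0))
    (hSdense : ∀ f : EuclideanSpace ℝ (Fin d) → EuclideanSpace ℝ (Fin d),
      Measurable f → MemLp f 2 (μ 0) → ∀ ε > 0,
        ∃ g ∈ S, ∫ x, ‖g x - f x‖ ^ 2 ∂(μ 0) < ε)
    (Tstar : Fin N → EuclideanSpace ℝ (Fin d) → EuclideanSpace ℝ (Fin d))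
    (hTstar0 : Tstar 0 = id)
    (hTstarm : ∀ i, Measurable (Tstar i))
    (hTstarL2 : ∀ i, i ≠ 0 → MemLp (Tstar i) 2 (μ 0))
    (hTstarpush : ∀ i, i ≠ 0 → Measure.map (Tstar i) (μ 0) = μ i)
    (lam : Fin N → ℝ) (hlam : ∀ i, i ≠ 0 → 0 < lam i) :
    sInf {r : ℝ |
        ∃ T : Fin N → EuclideanSpace ℝ (Fin d) → EuclideanSpace ℝ (Fin d),
          T 0 = id ∧ (∀ i, i ≠ 0 → T i ∈ S) ∧ r = penalizedCost K μ lam T} ≤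
      transportCost (μ 0) Tstar := by
  classical
  obtain ⟨C0, hC0⟩ := hKbdd
  set C := max C0 0 with hCdef
  have hC : ∀ x y, |K x y| ≤ C := fun x y => (hC0 x y).trans (le_max_left _ _)
  have hCnn : (0:ℝ) ≤ C := le_max_right _ _
  have hid2 : MemLp (id : EuclideanSpace ℝ (Fin d) → EuclideanSpace ℝ (Fin d)) 2 (μ 0) := by
    refine (memLp_two_iff_integrable_sq_norm aestronglyMeasurable_id).mpr ?_
    simpa using hmom 0
  have hTs2 : ∀ i, MemLp (Tstar i) 2 (μ 0) := by
    intro i; by_cases h : i = 0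
    · rw [h, hTstar0]; exact hid2
    · exact hTstarL2 i h
  -- lower bound on mmdSq terms
  have hmmd_lb : ∀ (g : EuclideanSpace ℝ (Fin d) → EuclideanSpace ℝ (Fin d)),
      Measurable g → ∀ i : Fin N, -(4*C) ≤ mmdSq K (Measure.map g (μ 0)) (μ i) := by
    intro g hg i
    haveI : IsProbabilityMeasure (Measure.map g (μ 0)) :=
      Measure.isProbabilityMeasure_map hg.aemeasurable
    have h1 := aux_dbl_bound (Measure.map g (μ 0)) (Measure.map g (μ 0)) K C hC
    have h2 := aux_dbl_bound (Measure.map g (μ 0)) (μ i) K C hC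
    have h3 := aux_dbl_bound (μ i) (μ i) K C hC
    unfold mmdSq
    linarith [(abs_le.mp h1).1, (abs_le.mp h2).1, (abs_le.mp h2).2, (abs_le.mp h3).1]
  have hbdd : BddBelow {r : ℝ |
      ∃ T : Fin N → EuclideanSpace ℝ (Fin d) → EuclideanSpace ℝ (Fin d),
        T 0 = id ∧ (∀ i, i ≠ 0 → T i ∈ S) ∧ r = penalizedCost K μ lam T} := by
    refine ⟨∑ i ∈ Finset.univ \ {0}, lam i * (-(4*C)), ?_⟩
    rintro r ⟨T, hT0, hTS, rfl⟩
    rw [penalizedCost]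
    have htc : 0 ≤ transportCost (μ 0) T := by
      refine integral_nonneg fun x => Finset.sum_nonneg fun i _ =>
        Finset.sum_nonneg fun j _ => ?_
      split_ifs <;> positivity
    have hsum : ∑ i ∈ Finset.univ \ {0}, lam i * (-(4*C)) ≤
        ∑ i ∈ Finset.univ \ {0}, lam i * mmdSq K (Measure.map (T i) (μ 0)) (μ i) := by
      refine Finset.sum_le_sum fun i hi => ?_
      have hi0 : i ≠ 0 := by simpa using (Finset.mem_sdiff.mp hi).2
      exact mul_le_mul_of_nonneg_left (hmmd_lb (T i) (hSmeas _ (hTS i hi0)) i) (hlam i hi0).le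
    linarith
  refine le_of_forall_pos_le_add fun ε hε => ?_
  set M := transportCost (μ 0) Tstar with hMdef
  have hMnn : 0 ≤ M := by
    refine integral_nonneg fun x => Finset.sum_nonneg fun i _ =>
      Finset.sum_nonneg fun j _ => ?_
    split_ifs <;> positivity
  set L := ∑ i ∈ Finset.univ \ {0}, lam i with hLdef
  have hLnn : 0 ≤ L :=
    Finset.sum_nonneg fun i hi => (hlam i (by simpa using (Finset.mem_sdiff.mp hi).2)).le
  have hD1 : (0:ℝ) < M + L*CK + 1 := by nlinarith [mul_nonneg hLnn hCK.le]
  obtain ⟨η, hη, hη1⟩ : ∃ η : ℝ, 0 < η ∧ η * (M + L*CK + 1) ≤ ε/2 := by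
    have hne : (M + L*CK + 1) ≠ 0 := hD1.ne'
    refine ⟨ε/(2*(M + L*CK + 1)), div_pos hε (by linarith), le_of_eq ?_⟩
    field_simp
  have hinvη : 0 < 1/η := by positivity
  have hLCKη : 0 ≤ L*CK/η := div_nonneg (mul_nonneg hLnn hCK.le) hη.le
  have hD2 : (0:ℝ) < 4*(1+1/η)*(N:ℝ)^2 + L*CK/η + 1 := by
    nlinarith [sq_nonneg (N:ℝ), mul_nonneg (by linarith : (0:ℝ) ≤ 4*(1+1/η)) (sq_nonneg (N:ℝ))]
  obtain ⟨δ, hδ, hδ1⟩ : ∃ δ : ℝ, 0 < δ ∧ δ * (4*(1+1/η)*(N:ℝ)^2 + L*CK/η + 1) ≤ ε/2 := by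
    have hne : (4*(1+1/η)*(N:ℝ)^2 + L*CK/η + 1) ≠ 0 := hD2.ne'
    refine ⟨ε/(2*(4*(1+1/η)*(N:ℝ)^2 + L*CK/η + 1)), div_pos hε (by linarith), le_of_eq ?_⟩
    field_simp
  -- choose approximating maps
  have hex : ∀ i : Fin N, ∃ gi, (i ≠ 0 → gi ∈ S) ∧ (i = 0 → gi = id) ∧
      ∫ x, ‖gi x - Tstar i x‖^2 ∂(μ 0) ≤ δ := by
    intro i
    by_cases h : i = 0
    · refine ⟨id, fun h' => absurd h h', fun _ => rfl, ?_⟩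
      rw [h, hTstar0]; simp [hδ.le]
    · obtain ⟨gi, hgi, hlt⟩ := hSdense (Tstar i) (hTstarm i) (hTstarL2 i h) δ hδ
      exact ⟨gi, fun _ => hgi, fun h' => absurd h' h, hlt.le⟩
  choose T hTS hT0 hTδ using hex
  have hT00 : T 0 = id := hT0 0 rfl
  have hTmeas : ∀ i, Measurable (T i) := by
    intro i; by_cases h : i = 0
    · rw [h, hT00]; exact measurable_id
    · exact hSmeas _ (hTS i h)
  have hT2 : ∀ i, MemLp (T i) 2 (μ 0) := by
    intro i; by_cases h : i = 0
    · rw [h, hT00]; exact hid2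
    · exact hSL2 _ (hTS i h)
  have hmem : penalizedCost K μ lam T ∈ {r : ℝ |
      ∃ T : Fin N → EuclideanSpace ℝ (Fin d) → EuclideanSpace ℝ (Fin d),
        T 0 = id ∧ (∀ i, i ≠ 0 → T i ∈ S) ∧ r = penalizedCost K μ lam T} :=
    ⟨T, hT00, fun i hi => hTS i hi, rfl⟩
  refine (csInf_le hbdd hmem).trans ?_
  -- integrability bookkeeping
  have hBint : ∀ i j : Fin N, Integrable (fun x => ‖Tstar i x - Tstar j x‖^2) (μ 0) :=
    fun i j => aux_sqint _ (hTs2 i) (hTs2 j)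
  have hAint : ∀ i j : Fin N, Integrable (fun x => ‖T i x - T j x‖^2) (μ 0) :=
    fun i j => aux_sqint _ (hT2 i) (hT2 j)
  have hEint : ∀ i : Fin N, Integrable (fun x => ‖T i x - Tstar i x‖^2) (μ 0) :=
    fun i => aux_sqint _ (hT2 i) (hTs2 i)
  -- per-pair transport bound
  have hpair : ∀ i j : Fin N, (∫ x, ‖T i x - T j x‖^2 ∂(μ 0)) ≤
      (1+η) * (∫ x, ‖Tstar i x - Tstar j x‖^2 ∂(μ 0)) + (1+1/η)*(4*δ) := by
    intro i j
    have hg1 : Integrable (fun x => (1+η)*‖Tstar i x - Tstar j x‖^2) (μ 0) :=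
      (hBint i j).const_mul _
    have ha : Integrable (fun x => 2*‖T i x - Tstar i x‖^2) (μ 0) := (hEint i).const_mul 2
    have hb : Integrable (fun x => 2*‖T j x - Tstar j x‖^2) (μ 0) := (hEint j).const_mul 2
    have hab : Integrable (fun x => 2*‖T i x - Tstar i x‖^2 + 2*‖T j x - Tstar j x‖^2) (μ 0) :=
      ha.add hb
    have hg2 : Integrable (fun x =>
        (1+1/η)*(2*‖T i x - Tstar i x‖^2 + 2*‖T j x - Tstar j x‖^2)) (μ 0) := hab.const_mul _
    have hrint : Integrable (fun x => (1+η)*‖Tstar i x - Tstar j x‖^2 +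
        (1+1/η)*(2*‖T i x - Tstar i x‖^2 + 2*‖T j x - Tstar j x‖^2)) (μ 0) := hg1.add hg2
    have hpt : ∀ x, ‖T i x - T j x‖^2 ≤ (1+η)*‖Tstar i x - Tstar j x‖^2 +
        (1+1/η)*(2*‖T i x - Tstar i x‖^2 + 2*‖T j x - Tstar j x‖^2) := by
      intro x
      have heq : T i x - T j x = (Tstar i x - Tstar j x) +
          ((T i x - Tstar i x) - (T j x - Tstar j x)) := by abel
      have htri : ‖T i x - T j x‖ ≤ ‖Tstar i x - Tstar j x‖ + ‖T i x - Tstar i x‖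
          + ‖T j x - Tstar j x‖ := by
        rw [heq]
        refine (norm_add_le _ _).trans ?_
        have := norm_sub_le (T i x - Tstar i x) (T j x - Tstar j x)
        linarith
      exact aux_sq hη (norm_nonneg _) (norm_nonneg _) (norm_nonneg _) (norm_nonneg _) htri
    have hmono := integral_mono (hAint i j) hrint hpt
    rw [integral_add hg1 hg2, integral_const_mul, integral_const_mul,
      integral_add ha hb, integral_const_mul, integral_const_mul] at hmono
    refine hmono.trans ?_
    have h1 : (0:ℝ) ≤ 1 + 1/η := by positivity
    have hdi := hTδ i
    have hdj := hTδ j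
    have : 2*(∫ x, ‖T i x - Tstar i x‖^2 ∂(μ 0)) + 2*(∫ x, ‖T j x - Tstar j x‖^2 ∂(μ 0))
        ≤ 4*δ := by linarith
    have := mul_le_mul_of_nonneg_left this h1
    linarith
  -- transport cost bound
  have htc : transportCost (μ 0) T ≤ (1+η)*M + (N:ℝ)^2*((1+1/η)*(4*δ)) := by
    rw [aux_tc (μ 0) T hT2]
    have hM' : M = ∑ i : Fin N, ∑ j : Fin N,
        (if i < j then ∫ x, ‖Tstar i x - Tstar j x‖^2 ∂(μ 0) else 0) := by
      rw [hMdef, aux_tc (μ 0) Tstar hTs2]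
    have hc : (0:ℝ) ≤ (1+1/η)*(4*δ) := by positivity
    have step1 : ∑ i : Fin N, ∑ j : Fin N, (if i < j then ∫ x, ‖T i x - T j x‖^2 ∂(μ 0) else 0)
        ≤ ∑ i : Fin N, ∑ j : Fin N,
          ((1+η)*(if i < j then ∫ x, ‖Tstar i x - Tstar j x‖^2 ∂(μ 0) else 0) +
            (if i < j then (1+1/η)*(4*δ) else 0)) := by
      refine Finset.sum_le_sum fun i _ => Finset.sum_le_sum fun j _ => ?_
      split_ifs with h
      · exact hpair i j
      · simp
    have step2 : ∑ i : Fin N, ∑ j : Fin N,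
          ((1+η)*(if i < j then ∫ x, ‖Tstar i x - Tstar j x‖^2 ∂(μ 0) else 0) +
            (if i < j then (1+1/η)*(4*δ) else 0))
        = (1+η)*(∑ i : Fin N, ∑ j : Fin N,
            (if i < j then ∫ x, ‖Tstar i x - Tstar j x‖^2 ∂(μ 0) else 0)) +
          ∑ i : Fin N, ∑ j : Fin N, (if i < j then (1+1/η)*(4*δ) else 0) := by
      simp only [Finset.sum_add_distrib, Finset.mul_sum]
    have step3 : ∑ i : Fin N, ∑ j : Fin N, (if i < j then (1+1/η)*(4*δ) else 0)
        ≤ (N:ℝ)^2*((1+1/η)*(4*δ)) := by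
      calc ∑ i : Fin N, ∑ j : Fin N, (if i < j then (1+1/η)*(4*δ) else 0)
          ≤ ∑ _i : Fin N, ∑ _j : Fin N, (1+1/η)*(4*δ) := by
            refine Finset.sum_le_sum fun i _ => Finset.sum_le_sum fun j _ => ?_
            split_ifs with h
            · exact le_rfl
            · exact hc
        _ = (N:ℝ)^2*((1+1/η)*(4*δ)) := by
            simp [Finset.sum_const, Finset.card_univ]
            ring
    calc ∑ i : Fin N, ∑ j : Fin N, (if i < j then ∫ x, ‖T i x - T j x‖^2 ∂(μ 0) else 0)
        ≤ _ := step1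
      _ = _ := step2
      _ ≤ (1+η)*M + (N:ℝ)^2*((1+1/η)*(4*δ)) := by rw [hM']; linarith [step3]
  -- mmd bound
  have hmmd : ∀ i ∈ Finset.univ \ ({0} : Finset (Fin N)),
      lam i * mmdSq K (Measure.map (T i) (μ 0)) (μ i) ≤ lam i * (2*CK*(η/2 + δ/(2*η))) := by
    intro i hi
    have hi0 : i ≠ 0 := by simpa using (Finset.mem_sdiff.mp hi).2
    refine mul_le_mul_of_nonneg_left ?_ (hlam i hi0).le
    rw [← hTstarpush i hi0]
    have hnormint : Integrable (fun x => ‖T i x - Tstar i x‖) (μ 0) := by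
      have h := ((hT2 i).sub (hTs2 i)).integrable (by norm_num : (1:ENNReal) ≤ 2)
      simpa [Pi.sub_apply] using h.norm
    refine (aux_mmd (μ 0) K hKm C hC CK hKlip (T i) (Tstar i) (hTmeas i) (hTstarm i)
      hnormint).trans ?_
    have hCK2 : (0:ℝ) ≤ 2*CK := by linarith
    refine mul_le_mul_of_nonneg_left ?_ hCK2
    have hcst : Integrable (fun _x : EuclideanSpace ℝ (Fin d) => η/2) (μ 0) := integrable_const _
    have hdv : Integrable (fun x => ‖T i x - Tstar i x‖^2/(2*η)) (μ 0) := (hEint i).div_const _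
    have hri : Integrable (fun x => η/2 + ‖T i x - Tstar i x‖^2/(2*η)) (μ 0) := hcst.add hdv
    have hIbd := integral_mono hnormint hri (fun x => aux_amgm hη (norm_nonneg _))
    rw [integral_add hcst hdv, integral_const,
      integral_div, Measure.real, measure_univ, ENNReal.toReal_one, smul_eq_mul, one_mul] at hIbd
    refine hIbd.trans ?_
    have hdiv : (∫ x, ‖T i x - Tstar i x‖^2 ∂(μ 0))/(2*η) ≤ δ/(2*η) :=
      (div_le_div_iff_of_pos_right (by positivity)).mpr (hTδ i)
    linarith
  have hsum : ∑ i ∈ Finset.univ \ ({0} : Finset (Fin N)),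
      lam i * mmdSq K (Measure.map (T i) (μ 0)) (μ i) ≤ L * (2*CK*(η/2 + δ/(2*η))) := by
    rw [hLdef, Finset.sum_mul]
    exact Finset.sum_le_sum hmmd
  rw [penalizedCost]
  have hfin1 : η*(M + L*CK) ≤ ε/2 := by
    have e : η*(M + L*CK + 1) = η*(M + L*CK) + η := by ring
    linarith [hη.le]
  have hfin2 : δ*(4*(1+1/η)*(N:ℝ)^2 + L*CK/η) ≤ ε/2 := by
    have e : δ*(4*(1+1/η)*(N:ℝ)^2 + L*CK/η + 1)
        = δ*(4*(1+1/η)*(N:ℝ)^2 + L*CK/η) + δ := by ring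
    linarith [hδ.le]
  have hid' : L*(2*CK*(η/2 + δ/(2*η))) = L*CK*η + δ*(L*CK/η) := by
    field_simp
  have hexp : (N:ℝ)^2*((1+1/η)*(4*δ)) = δ*(4*(1+1/η)*(N:ℝ)^2) := by ring
  have e1 : (1+η)*M + δ*(4*(1+1/η)*(N:ℝ)^2) + (L*CK*η + δ*(L*CK/η))
      = M + (η*M + η*(L*CK)) + δ*(4*(1+1/η)*(N:ℝ)^2 + L*CK/η) := by ring
  have e2 : η*(M + L*CK) = η*M + η*(L*CK) := by ring
  linarith [htc, hsum, hfin1, hfin2]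
end

section
/- Let A be a nonempty set, N ≥ 2, and let F : A → ℝ and G_i : A → ℝ, i = 2, …, N, be nonnegative functions. Suppose there exists C ∈ ℝ such that for every λ = (λ_2, …, λ_N) ∈ (0, ∞)^{N−1} one has inf_{a ∈ A} ( F(a) + ∑_{i=2}^N λ_i G_i(a) ) ≤ C. Let (λ^n)_{n≥1} be a sequence in (0, ∞)^{N−1} with λ_i^n nondecreasing in n and λ_i^n → ∞ as n → ∞ for each i, let (ε^n)_{n≥1} be a nonincreasing sequence of nonnegative reals with ε^n → 0, and let a^n ∈ A satisfy F(a^n) + ∑_{i=2}^N λ_i^n G_i(a^n) ≤ inf_{a ∈ A} ( F(a) + ∑_{i=2}^N λ_i^n G_i(a) ) + ε^n for every n. Then lim_{n → ∞} ∑_{i=2}^N λ_i^n G_i(a^n) = 0. -/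
/-!
Let `v λ = inf_a (F a + ∑ λ_i G_i a)`. For nonnegative weights `v` is monotone, and it is
bounded by `C` on positive weights, so `v λⁿ` and `v (λⁿ / 2)` both converge to the supremum
of `v` over positive weights, because `λⁿ` and `λⁿ / 2` eventually dominate every fixed weight.
Comparing the `εⁿ`-optimality of `aⁿ` for `λⁿ` with the value of `aⁿ` for the weights `λⁿ / 2`
gives `½ ∑ λⁿ_i G_i aⁿ ≤ v λⁿ - v (λⁿ / 2) + εⁿ → 0`.
-/

open Filter Topology

theorem tendsto_csSup_image_of_monotoneOn {α β γ : Type*} [Preorder α]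
    [ConditionallyCompleteLinearOrder γ] [TopologicalSpace γ] [OrderTopology γ]
    {S : Set α} {v : α → γ} (hv : MonotoneOn v S) (hS : S.Nonempty) (hbdd : BddAbove (v '' S))
    {l : Filter β} {u : β → α} (huS : ∀ᶠ n in l, u n ∈ S) (hu : ∀ s ∈ S, ∀ᶠ n in l, s ≤ u n) :
    Tendsto (v ∘ u) l (𝓝 (sSup (v '' S))) := by
  refine tendsto_order.2 ⟨fun b hb => ?_, fun b hb => ?_⟩
  · obtain ⟨_, ⟨s, hs, rfl⟩, hbs⟩ := exists_lt_of_lt_csSup (hS.image v) hb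
    filter_upwards [huS, hu s hs] with n hnS hsn
    exact hbs.trans_le (hv hs hnS hsn)
  · filter_upwards [huS] with n hnS
    exact (le_csSup hbdd (Set.mem_image_of_mem v hnS)).trans_lt hb

section Penalization

variable {A ι : Type*} [Fintype ι] (F : A → ℝ) (G : ι → A → ℝ)

noncomputable def penalizedInf (l : ι → ℝ) : ℝ :=
  ⨅ a, F a + ∑ i, l i * G i a

variable {F G}

theorem penalized_nonneg (hF : ∀ a, 0 ≤ F a) (hG : ∀ i a, 0 ≤ G i a) {l : ι → ℝ} (hl : 0 ≤ l)
    (a : A) : 0 ≤ F a + ∑ i, l i * G i a :=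
  add_nonneg (hF a) (Finset.sum_nonneg fun i _ => mul_nonneg (hl i) (hG i a))

theorem penalizedInf_le (hF : ∀ a, 0 ≤ F a) (hG : ∀ i a, 0 ≤ G i a) {l : ι → ℝ} (hl : 0 ≤ l)
    (a : A) : penalizedInf F G l ≤ F a + ∑ i, l i * G i a :=
  ciInf_le ⟨0, by rintro _ ⟨b, rfl⟩; exact penalized_nonneg hF hG hl b⟩ a

theorem penalizedInf_mono (hF : ∀ a, 0 ≤ F a) (hG : ∀ i a, 0 ≤ G i a) {l m : ι → ℝ}
    (hl : 0 ≤ l) (hlm : l ≤ m) : penalizedInf F G l ≤ penalizedInf F G m :=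
  ciInf_mono ⟨0, by rintro _ ⟨b, rfl⟩; exact penalized_nonneg hF hG hl b⟩ fun a => by
    gcongr with i
    exacts [hG i a, hlm i]

theorem tendsto_penalizedInf (hF : ∀ a, 0 ≤ F a) (hG : ∀ i a, 0 ≤ G i a)
    (hbdd : BddAbove (penalizedInf F G '' {l | ∀ i, 0 < l i}))
    {u : ℕ → ι → ℝ} (hu : ∀ i, Tendsto (u · i) atTop atTop) :
    Tendsto (fun n => penalizedInf F G (u n)) atTop
      (𝓝 (sSup (penalizedInf F G '' {l | ∀ i, 0 < l i}))) :=
  tendsto_csSup_image_of_monotoneOn (S := {l : ι → ℝ | ∀ i, 0 < l i}) (v := penalizedInf F G)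
    (fun _ hl _ _ hlm => penalizedInf_mono hF hG (fun i => (hl i).le) hlm)
    ⟨fun _ => 1, fun _ => one_pos⟩ hbdd
    (eventually_all.2 fun i => (hu i).eventually_gt_atTop 0)
    fun s _ => eventually_all.2 fun i => (hu i).eventually_ge_atTop (s i)

theorem sum_penalty_le_of_le_penalizedInf_add (hF : ∀ a, 0 ≤ F a) (hG : ∀ i a, 0 ≤ G i a)
    {l : ι → ℝ} (hl : 0 ≤ l) {a : A} {ε : ℝ}
    (ha : F a + ∑ i, l i * G i a ≤ penalizedInf F G l + ε) :
    ∑ i, l i * G i a ≤ 2 * (penalizedInf F G l - penalizedInf F G (l / 2) + ε) := by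
  have hhalf : penalizedInf F G (l / 2) ≤ F a + (∑ i, l i * G i a) / 2 := by
    calc _ ≤ F a + ∑ i, (l / 2) i * G i a :=
          penalizedInf_le hF hG (fun i => div_nonneg (hl i) zero_le_two) a
      _ = _ := by simp only [Pi.div_apply, Pi.ofNat_apply, div_mul_eq_mul_div, Finset.sum_div]
  linarith

end Penalization

theorem stmt_11_general {A : Type*} (N : ℕ)
    (F : A → ℝ) (G : Fin (N - 1) → A → ℝ)
    (hF : ∀ a, 0 ≤ F a) (hG : ∀ i a, 0 ≤ G i a)
    (hC : ∃ C : ℝ, ∀ lam : Fin (N - 1) → ℝ, (∀ i, 0 < lam i) →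
      (⨅ a : A, (F a + ∑ i, lam i * G i a)) ≤ C)
    (lam : ℕ → Fin (N - 1) → ℝ)
    (hlampos : ∀ n i, 0 < lam n i)
    (hlamtop : ∀ i, Tendsto (fun n => lam n i) atTop atTop)
    (eps : ℕ → ℝ)
    (hepslim : Tendsto eps atTop (nhds 0))
    (a : ℕ → A)
    (hopt : ∀ n, F (a n) + ∑ i, lam n i * G i (a n) ≤
      (⨅ b : A, (F b + ∑ i, lam n i * G i b)) + eps n) :
    Tendsto (fun n => ∑ i, lam n i * G i (a n)) atTop (nhds 0) := by
  obtain ⟨C, hC⟩ := hC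
  have hbdd : BddAbove (penalizedInf F G '' {l | ∀ i, 0 < l i}) :=
    ⟨C, by rintro _ ⟨l, hl, rfl⟩; exact hC l hl⟩
  have hfull := tendsto_penalizedInf hF hG hbdd hlamtop
  have hhalf := tendsto_penalizedInf hF hG hbdd (u := fun n => lam n / 2)
    fun i => (hlamtop i).atTop_div_const two_pos
  have hgap : Tendsto (fun n => 2 * (penalizedInf F G (lam n) - penalizedInf F G (lam n / 2)
      + eps n)) atTop (𝓝 0) := by
    simpa using ((hfull.sub hhalf).add hepslim).const_mul 2
  exact tendsto_of_tendsto_of_tendsto_of_le_of_le tendsto_const_nhds hgap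
    (fun n => Finset.sum_nonneg fun i _ => mul_nonneg (hlampos n i).le (hG i (a n)))
    fun n => sum_penalty_le_of_le_penalizedInf_add hF hG (fun i => (hlampos n i).le) (hopt n)

/-- Abstract penalization lemma: if the penalized infima are uniformly bounded by some `C`
over all positive weight vectors, the weights `λ^n` increase to infinity, `ε^n` decreases
to `0`, and `a^n` is `ε^n`-optimal for the `λ^n`-penalized problem, then the total penalty
`∑ i λ_i^n G_i(a^n)` tends to `0`. -/
theorem stmt_11 {A : Type*} [Nonempty A] (N : ℕ) (hN : 2 ≤ N)
    (F : A → ℝ) (G : Fin (N - 1) → A → ℝ)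
    (hF : ∀ a, 0 ≤ F a) (hG : ∀ i a, 0 ≤ G i a)
    (hC : ∃ C : ℝ, ∀ lam : Fin (N - 1) → ℝ, (∀ i, 0 < lam i) →
      (⨅ a : A, (F a + ∑ i, lam i * G i a)) ≤ C)
    (lam : ℕ → Fin (N - 1) → ℝ)
    (hlampos : ∀ n i, 0 < lam n i)
    (hlammono : ∀ i, Monotone fun n => lam n i)
    (hlamtop : ∀ i, Tendsto (fun n => lam n i) atTop atTop)
    (eps : ℕ → ℝ)
    (hepsnn : ∀ n, 0 ≤ eps n)
    (hepsanti : Antitone eps)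
    (hepslim : Tendsto eps atTop (nhds 0))
    (a : ℕ → A)
    (hopt : ∀ n, F (a n) + ∑ i, lam n i * G i (a n) ≤
      (⨅ b : A, (F b + ∑ i, lam n i * G i b)) + eps n) :
    Tendsto (fun n => ∑ i, lam n i * G i (a n)) atTop (nhds 0) :=
  stmt_11_general N F G hF hG hC lam hlampos hlamtop eps hepslim a hopt
end

section
/- Let N ≥ 2 and let μ_1, …, μ_N be Borel probability measures on ℝ^d with ∫ |x|² μ_i(dx) < ∞ for all i. Let K : ℝ^d × ℝ^d → ℝ be a bounded Borel measurable symmetric kernel that is Lipschitz with constant C_K > 0, i.e. |K(x,y) − K(x',y')| ≤ C_K(|x − x'| + |y − y'|), and such that γ²_K(μ, ν) ≥ 0 for all Borel probability measures μ, ν on ℝ^d. Let S ⊆ L²(μ_1; ℝ^d) be a dense subset of the space of Borel maps ℝ^d → ℝ^d square-integrable with respect to μ_1. Suppose there exist Borel maps T*_2, …, T*_N ∈ L²(μ_1; ℝ^d) with T*_i♯μ_1 = μ_i for i = 2, …, N. Let (λ^n)_{n≥1} be a sequence of weight vectors with each λ_i^n > 0 nondecreasing in n and λ_i^n → ∞,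 let (ε^n)_{n≥1} be a nonincreasing sequence of positive reals with ε^n → 0, and for each n let T^n = (id, T_2^n, …, T_N^n) with T_i^n ∈ S satisfy M_{λ^n}(T^n) ≤ inf { M_{λ^n}(T) : T = (id, T_2, …, T_N), T_i ∈ S } + ε^n. Then lim_{n → ∞} ∑_{i=2}^N λ_i^n γ²_K(T_i^n♯μ_1, μ_i) = 0. -/
open MeasureTheory Filter

variable {d : ℕ}
local notation "E" => EuclideanSpace ℝ (Fin d)

lemma integrable_of_bdd {α : Type*} [MeasurableSpace α] {μ : Measure α} [IsFiniteMeasure μ]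
    {f : α → ℝ} {C : ℝ} (hf : Measurable f) (hC : ∀ x, |f x| ≤ C) : Integrable f μ :=
  ⟨hf.aestronglyMeasurable, HasFiniteIntegral.of_bounded
    (ae_of_all _ fun x => by simpa [Real.norm_eq_abs] using hC x)⟩

lemma double_map (μ : Measure E) [IsProbabilityMeasure μ]
    (K : E → E → ℝ) (hKm : Measurable (Function.uncurry K))
    (g h : E → E) (hg : Measurable g) (hh : Measurable h) :
    (∫ x, ∫ y, K x y ∂(Measure.map h μ) ∂(Measure.map g μ)) = ∫ x, ∫ y, K (g x) (h y) ∂μ ∂μ := by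
  have ihm : IsProbabilityMeasure (Measure.map h μ) := Measure.isProbabilityMeasure_map hh.aemeasurable
  have hsm : StronglyMeasurable (fun x => ∫ y, K x y ∂(Measure.map h μ)) :=
    hKm.stronglyMeasurable.integral_prod_right'
  rw [integral_map hg.aemeasurable hsm.aestronglyMeasurable]
  refine integral_congr_ae (Filter.Eventually.of_forall fun x => ?_)
  exact integral_map hh.aemeasurable (hKm.of_uncurry_left).aestronglyMeasurable

lemma mmd_le (μ : Measure E) [IsProbabilityMeasure μ]
    (K : E → E → ℝ) (hKm : Measurable (Function.uncurry K))
    {C : ℝ} (hKb : ∀ x y, |K x y| ≤ C)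
    {CK : ℝ} (hKlip : ∀ x x' y y', |K x y - K x' y'| ≤ CK * (‖x - x'‖ + ‖y - y'‖))
    (g h : E → E) (hg : Measurable g) (hh : Measurable h)
    (hI : Integrable (fun x => ‖g x - h x‖) μ) :
    mmdSq K (Measure.map g μ) (Measure.map h μ) ≤ 2 * CK * ∫ x, ‖g x - h x‖ ∂μ := by
  set I := ∫ x, ‖g x - h x‖ ∂μ with hIdef
  have meas2 : ∀ u v : E → E, Measurable u → Measurable v →
      Measurable fun p : E × E => K (u p.1) (v p.2) := fun u v hu hv =>
    hKm.comp ((hu.comp measurable_fst).prodMk (hv.comp measurable_snd))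
  have int_in : ∀ (u v : E → E), Measurable v → ∀ x : E,
      Integrable (fun y => K (u x) (v y)) μ := fun u v hv x =>
    integrable_of_bdd (hKm.comp (measurable_const.prodMk hv)) (fun y => hKb _ _)
  have int_out : ∀ (u v : E → E), Measurable u → Measurable v →
      Integrable (fun x => ∫ y, K (u x) (v y) ∂μ) μ := by
    intro u v hu hv
    refine integrable_of_bdd (C := C) ((meas2 u v hu hv).stronglyMeasurable.integral_prod_right'.measurable) (fun x => ?_)
    have := norm_integral_le_of_norm_le_const (μ := μ) (f := fun y => K (u x) (v y)) (C := C)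
      (ae_of_all _ fun y => by simpa [Real.norm_eq_abs] using hKb (u x) (v y))
    simpa [Real.norm_eq_abs, measure_univ] using this
  rw [mmdSq, double_map μ K hKm g g hg hg, double_map μ K hKm g h hg hh,
    double_map μ K hKm h h hh hh]
  have hAB : (∫ x, ∫ y, K (g x) (g y) ∂μ ∂μ) - (∫ x, ∫ y, K (g x) (h y) ∂μ ∂μ) ≤ CK * I := by
    rw [← integral_sub (int_out g g hg hg) (int_out g h hg hh)]
    have hptw : ∀ x, (∫ y, K (g x) (g y) ∂μ) - (∫ y, K (g x) (h y) ∂μ) ≤ CK * I := by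
      intro x
      rw [← integral_sub (int_in g g hg x) (int_in g h hh x)]
      calc (∫ y, (K (g x) (g y) - K (g x) (h y)) ∂μ)
          ≤ ∫ y, CK * ‖g y - h y‖ ∂μ := by
            refine integral_mono ((int_in g g hg x).sub (int_in g h hh x)) (hI.const_mul CK)
              fun y => ?_
            have h2 := (abs_le.mp (hKlip (g x) (g x) (g y) (h y))).2
            simpa using h2
        _ = CK * I := integral_const_mul _ _
    calc (∫ x, ((∫ y, K (g x) (g y) ∂μ) - ∫ y, K (g x) (h y) ∂μ) ∂μ)
        ≤ ∫ _x, CK * I ∂μ := integral_mono ((int_out g g hg hg).sub (int_out g h hg hh))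
            (integrable_const _) hptw
      _ = CK * I := by simp
  have hCB : (∫ x, ∫ y, K (h x) (h y) ∂μ ∂μ) - (∫ x, ∫ y, K (g x) (h y) ∂μ ∂μ) ≤ CK * I := by
    rw [← integral_sub (int_out h h hh hh) (int_out g h hg hh)]
    have hptw : ∀ x, (∫ y, K (h x) (h y) ∂μ) - (∫ y, K (g x) (h y) ∂μ) ≤ CK * ‖g x - h x‖ := by
      intro x
      rw [← integral_sub (int_in h h hh x) (int_in g h hh x)]
      calc (∫ y, (K (h x) (h y) - K (g x) (h y)) ∂μ)
          ≤ ∫ _y, CK * ‖g x - h x‖ ∂μ := by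
            refine integral_mono ((int_in h h hh x).sub (int_in g h hh x)) (integrable_const _)
              fun y => ?_
            have h2 := (abs_le.mp (hKlip (h x) (g x) (h y) (h y))).2
            have hrev : ‖h x - g x‖ = ‖g x - h x‖ := norm_sub_rev _ _
            simp only [sub_self, norm_zero, add_zero, hrev] at h2
            linarith
        _ = CK * ‖g x - h x‖ := by simp
    calc (∫ x, ((∫ y, K (h x) (h y) ∂μ) - ∫ y, K (g x) (h y) ∂μ) ∂μ)
        ≤ ∫ x, CK * ‖g x - h x‖ ∂μ := integral_mono ((int_out h h hh hh).sub (int_out g h hg hh))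
            (hI.const_mul CK) hptw
      _ = CK * I := integral_const_mul _ _
  linarith

lemma L1_le (μ : Measure E) [IsProbabilityMeasure μ] (f : E → E)
    (hf2 : MemLp f 2 μ) {θ : ℝ} (hθ : 0 < θ)
    (hb : (∫ x, ‖f x‖^2 ∂μ) ≤ θ^2) : (∫ x, ‖f x‖ ∂μ) ≤ θ := by
  have hf1 : Integrable f μ := hf2.integrable one_le_two
  have hfsq : Integrable (fun x => ‖f x‖^2) μ :=
    (memLp_two_iff_integrable_sq_norm hf2.aestronglyMeasurable).mp hf2
  have h2θ : (0:ℝ) < 2*θ := by linarith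
  calc (∫ x, ‖f x‖ ∂μ)
      ≤ ∫ x, (θ/2 + ‖f x‖^2/(2*θ)) ∂μ := by
        refine integral_mono hf1.norm ((integrable_const _).add (hfsq.div_const _)) fun x => ?_
        have heq : θ/2 + ‖f x‖^2/(2*θ) = (θ^2 + ‖f x‖^2)/(2*θ) := by field_simp
        rw [heq, le_div_iff₀ h2θ]
        nlinarith [sq_nonneg (θ - ‖f x‖)]
    _ = θ/2 + (∫ x, ‖f x‖^2 ∂μ)/(2*θ) := by
        rw [integral_add (integrable_const _) (hfsq.div_const _), integral_const,
          integral_div]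
        simp
    _ ≤ θ/2 + θ^2/(2*θ) := by gcongr
    _ = θ := by field_simp; ring


lemma sq_key {ε : ℝ} (hε : 0 < ε) (a b : E) :
    ‖a‖^2 ≤ (1+ε)*‖b‖^2 + (1+1/ε)*‖a - b‖^2 := by
  have h1 : ‖a‖ ≤ ‖b‖ + ‖a - b‖ := by
    calc ‖a‖ = ‖b + (a - b)‖ := by rw [add_sub_cancel]
    _ ≤ ‖b‖ + ‖a - b‖ := norm_add_le _ _
  have h2 : ‖a‖^2 ≤ (‖b‖ + ‖a-b‖)^2 := pow_le_pow_left₀ (norm_nonneg a) h1 2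
  have key : 0 ≤ (ε*‖b‖ - ‖a-b‖)^2 / ε := div_nonneg (sq_nonneg _) hε.le
  have expand : (ε*‖b‖ - ‖a-b‖)^2 / ε = ε*‖b‖^2 - 2*‖b‖*‖a-b‖ + (1/ε)*‖a-b‖^2 := by
    field_simp; ring
  nlinarith [norm_nonneg b, norm_nonneg (a-b)]

lemma two_sq (u v : E) : ‖u - v‖^2 ≤ 2*‖u‖^2 + 2*‖v‖^2 := by
  have h1 : ‖u - v‖ ≤ ‖u‖ + ‖v‖ := norm_sub_le u v
  have h2 : ‖u - v‖^2 ≤ (‖u‖ + ‖v‖)^2 := pow_le_pow_left₀ (norm_nonneg _) h1 2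
  nlinarith [sq_nonneg (‖u‖ - ‖v‖)]

lemma cost_le {N : ℕ} (μ0 : Measure E) [IsProbabilityMeasure μ0]
    (g h : Fin N → E → E) (hg : ∀ i, MemLp (g i) 2 μ0) (hh : ∀ i, MemLp (h i) 2 μ0)
    (ε : ℝ) (hε : 0 < ε) :
    transportCost μ0 g ≤ (1 + ε) * transportCost μ0 h
      + 4 * (1 + 1/ε) * (N:ℝ) * ∑ i, ∫ x, ‖g i x - h i x‖ ^ 2 ∂μ0 := by
  classical
  have sq_int : ∀ (u : E → E), MemLp u 2 μ0 → Integrable (fun x => ‖u x‖^2) μ0 := fun u hu =>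
    (memLp_two_iff_integrable_sq_norm hu.aestronglyMeasurable).mp hu
  have pg : ∀ i j : Fin N, Integrable (fun x => ‖g i x - g j x‖^2) μ0 := fun i j =>
    sq_int _ ((hg i).sub (hg j))
  have ph : ∀ i j : Fin N, Integrable (fun x => ‖h i x - h j x‖^2) μ0 := fun i j =>
    sq_int _ ((hh i).sub (hh j))
  have pd : ∀ i : Fin N, Integrable (fun x => ‖g i x - h i x‖^2) μ0 := fun i =>
    sq_int _ ((hg i).sub (hh i))
  have int_cg : Integrable (fun x => ∑ i : Fin N, ∑ j : Fin N,
      (if i < j then ‖g i x - g j x‖ ^ 2 else 0)) μ0 := by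
    refine integrable_finset_sum _ fun i _ => integrable_finset_sum _ fun j _ => ?_
    split_ifs
    · exact pg i j
    · exact integrable_const 0
  have int_ch : Integrable (fun x => ∑ i : Fin N, ∑ j : Fin N,
      (if i < j then ‖h i x - h j x‖ ^ 2 else 0)) μ0 := by
    refine integrable_finset_sum _ fun i _ => integrable_finset_sum _ fun j _ => ?_
    split_ifs
    · exact ph i j
    · exact integrable_const 0
  have int_sumd : Integrable (fun x => ∑ i : Fin N, ‖g i x - h i x‖^2) μ0 :=
    integrable_finset_sum _ fun i _ => pd i
  have hptw : ∀ x, (∑ i : Fin N, ∑ j : Fin N, (if i < j then ‖g i x - g j x‖ ^ 2 else 0))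
      ≤ (1+ε) * (∑ i : Fin N, ∑ j : Fin N, (if i < j then ‖h i x - h j x‖ ^ 2 else 0))
        + 4*(1+1/ε)*(N:ℝ) * ∑ i : Fin N, ‖g i x - h i x‖^2 := by
    intro x
    have hinv : (0:ℝ) < 1/ε := by positivity
    have term : ∀ i j : Fin N, (if i < j then ‖g i x - g j x‖ ^ 2 else 0)
        ≤ (1+ε) * (if i < j then ‖h i x - h j x‖ ^ 2 else 0)
          + 2*(1+1/ε) * (‖g i x - h i x‖^2 + ‖g j x - h j x‖^2) := by
      intro i j
      split_ifs with hij
      · have k1 := sq_key hε (g i x - g j x) (h i x - h j x)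
        have heq : (g i x - g j x) - (h i x - h j x) = (g i x - h i x) - (g j x - h j x) := by
          abel
        have k2 := two_sq (g i x - h i x) (g j x - h j x)
        rw [heq] at k1
        nlinarith [sq_nonneg ‖g i x - g j x‖]
      · nlinarith [sq_nonneg ‖g i x - h i x‖, sq_nonneg ‖g j x - h j x‖]
    calc (∑ i : Fin N, ∑ j : Fin N, (if i < j then ‖g i x - g j x‖ ^ 2 else 0))
        ≤ ∑ i : Fin N, ∑ j : Fin N, ((1+ε) * (if i < j then ‖h i x - h j x‖ ^ 2 else 0)
            + 2*(1+1/ε) * (‖g i x - h i x‖^2 + ‖g j x - h j x‖^2)) :=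
          Finset.sum_le_sum fun i _ => Finset.sum_le_sum fun j _ => term i j
      _ = (1+ε) * (∑ i : Fin N, ∑ j : Fin N, (if i < j then ‖h i x - h j x‖ ^ 2 else 0))
            + 4*(1+1/ε)*(N:ℝ) * ∑ i : Fin N, ‖g i x - h i x‖^2 := by
          simp only [Finset.sum_add_distrib, ← Finset.mul_sum, Finset.sum_const,
            Finset.card_univ, Fintype.card_fin, nsmul_eq_mul]
          ring
  have intRHS : Integrable (fun x =>
      (1+ε) * (∑ i : Fin N, ∑ j : Fin N, (if i < j then ‖h i x - h j x‖ ^ 2 else 0))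
        + 4*(1+1/ε)*(N:ℝ) * ∑ i : Fin N, ‖g i x - h i x‖^2) μ0 :=
    (int_ch.const_mul _).add (int_sumd.const_mul _)
  calc transportCost μ0 g
      ≤ ∫ x, ((1+ε) * (∑ i : Fin N, ∑ j : Fin N, (if i < j then ‖h i x - h j x‖ ^ 2 else 0))
          + 4*(1+1/ε)*(N:ℝ) * ∑ i : Fin N, ‖g i x - h i x‖^2) ∂μ0 :=
        integral_mono int_cg intRHS hptw
    _ = (1 + ε) * transportCost μ0 h
      + 4 * (1 + 1/ε) * (N:ℝ) * ∑ i, ∫ x, ‖g i x - h i x‖ ^ 2 ∂μ0 := by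
        rw [integral_add (int_ch.const_mul _) (int_sumd.const_mul _), integral_const_mul,
          integral_const_mul, integral_finset_sum _ fun i _ => pd i]
        rfl


set_option maxHeartbeats 1600000 in
/-- Convergence of the penalization scheme: for `ε^n`-optimal tuples `T^n` of the
`λ^n`-penalized problems with `λ^n ↑ ∞` and `ε^n ↓ 0`, the total MMD penalty
`∑_{i≠1} λ_i^n γ²_K(T_i^n♯μ₁, μ_i)` tends to `0`. -/
theorem stmt_12 (d N : ℕ) [NeZero N] (hN : 2 ≤ N)
    (μ : Fin N → Measure (EuclideanSpace ℝ (Fin d)))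
    [∀ i, IsProbabilityMeasure (μ i)]
    (hmom : ∀ i, Integrable (fun x => ‖x‖ ^ 2) (μ i))
    (K : EuclideanSpace ℝ (Fin d) → EuclideanSpace ℝ (Fin d) → ℝ)
    (hKm : Measurable (Function.uncurry K))
    (hKbdd : ∃ C, ∀ x y, |K x y| ≤ C)
    (hKsymm : ∀ x y, K x y = K y x)
    (CK : ℝ) (hCK : 0 < CK)
    (hKlip : ∀ x x' y y', |K x y - K x' y'| ≤ CK * (‖x - x'‖ + ‖y - y'‖))
    (hKpos : ∀ μ' ν' : Measure (EuclideanSpace ℝ (Fin d)),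
      IsProbabilityMeasure μ' → IsProbabilityMeasure ν' → 0 ≤ mmdSq K μ' ν')
    (S : Set (EuclideanSpace ℝ (Fin d) → EuclideanSpace ℝ (Fin d)))
    (hSmeas : ∀ f ∈ S, Measurable f)
    (hSL2 : ∀ f ∈ S, MemLp f 2 (μ 0))
    (hSdense : ∀ f : EuclideanSpace ℝ (Fin d) → EuclideanSpace ℝ (Fin d),
      Measurable f → MemLp f 2 (μ 0) → ∀ ε > 0,
        ∃ g ∈ S, ∫ x, ‖g x - f x‖ ^ 2 ∂(μ 0) < ε)
    (Tstar : Fin N → EuclideanSpace ℝ (Fin d) → EuclideanSpace ℝ (Fin d))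
    (hTstar0 : Tstar 0 = id)
    (hTstarm : ∀ i, Measurable (Tstar i))
    (hTstarL2 : ∀ i, i ≠ 0 → MemLp (Tstar i) 2 (μ 0))
    (hTstarpush : ∀ i, i ≠ 0 → Measure.map (Tstar i) (μ 0) = μ i)
    (lam : ℕ → Fin N → ℝ)
    (hlampos : ∀ n, ∀ i, i ≠ 0 → 0 < lam n i)
    (hlammono : ∀ i, i ≠ 0 → Monotone fun n => lam n i)
    (hlamtop : ∀ i, i ≠ 0 → Tendsto (fun n => lam n i) atTop atTop)
    (eps : ℕ → ℝ)
    (hepspos : ∀ n, 0 < eps n)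
    (hepsanti : Antitone eps)
    (hepslim : Tendsto eps atTop (nhds 0))
    (T : ℕ → Fin N → EuclideanSpace ℝ (Fin d) → EuclideanSpace ℝ (Fin d))
    (hT0 : ∀ n, T n 0 = id)
    (hTS : ∀ n, ∀ i, i ≠ 0 → T n i ∈ S)
    (hTopt : ∀ n, penalizedCost K μ (lam n) (T n) ≤
      sInf {r : ℝ |
          ∃ T' : Fin N → EuclideanSpace ℝ (Fin d) → EuclideanSpace ℝ (Fin d),
            T' 0 = id ∧ (∀ i, i ≠ 0 → T' i ∈ S) ∧ r = penalizedCost K μ (lam n) T'} +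
        eps n) :
    Tendsto
      (fun n => ∑ i ∈ Finset.univ \ {0},
        lam n i * mmdSq K (Measure.map (T n i) (μ 0)) (μ i))
      atTop (nhds 0) := by
    classical
  obtain ⟨C, hKb⟩ := hKbdd
  have hNR : (0:ℝ) < (N:ℝ) := by
    have : 0 < N := Nat.pos_of_ne_zero (NeZero.ne N)
    exact_mod_cast this
  set s : Finset (Fin N) := Finset.univ \ {0} with hs
  have hine : ∀ i ∈ s, i ≠ 0 := fun i hi => by
    simp only [hs, Finset.mem_sdiff, Finset.mem_singleton] at hi; exact hi.2
  have hid2 : MemLp (id : EuclideanSpace ℝ (Fin d) → EuclideanSpace ℝ (Fin d)) 2 (μ 0) :=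
    (memLp_two_iff_integrable_sq_norm aestronglyMeasurable_id).mpr (hmom 0)
  have tc_nonneg : ∀ (T' : Fin N → EuclideanSpace ℝ (Fin d) → EuclideanSpace ℝ (Fin d)), 0 ≤ transportCost (μ 0) T' := fun T' =>
    integral_nonneg fun x => Finset.sum_nonneg fun i _ => Finset.sum_nonneg fun j _ => by
      split_ifs
      · positivity
      · exact le_refl 0
  set Mstar := transportCost (μ 0) Tstar with hMstardef
  have hMnn : 0 ≤ Mstar := tc_nonneg Tstar
  have hmmdnn : ∀ (f : EuclideanSpace ℝ (Fin d) → EuclideanSpace ℝ (Fin d)), f ∈ S → ∀ i : Fin N, 0 ≤ mmdSq K (Measure.map f (μ 0)) (μ i) :=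
    fun f hf i => hKpos _ _ (Measure.isProbabilityMeasure_map (hSmeas f hf).aemeasurable) inferInstance
  set Q : ℕ → Set ℝ := fun n => {r : ℝ |
      ∃ T' : Fin N → EuclideanSpace ℝ (Fin d) → EuclideanSpace ℝ (Fin d),
        T' 0 = id ∧ (∀ i, i ≠ 0 → T' i ∈ S) ∧ r = penalizedCost K μ (lam n) T'} with hQdef
  set v : ℕ → ℝ := fun n => sInf (Q n) with hvdef
  have hTopt' : ∀ n, transportCost (μ 0) (T n)
      + ∑ i ∈ s, lam n i * mmdSq K (Measure.map (T n i) (μ 0)) (μ i) ≤ v n + eps n :=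
    fun n => hTopt n
  have hex0 : ∀ i : Fin N, ∃ gi : EuclideanSpace ℝ (Fin d) → EuclideanSpace ℝ (Fin d), i ≠ 0 → gi ∈ S := by
    intro i
    by_cases hi : i = 0
    · exact ⟨id, fun h => absurd hi h⟩
    · obtain ⟨g, hg, -⟩ := hSdense (Tstar i) (hTstarm i) (hTstarL2 i hi) 1 one_pos
      exact ⟨g, fun _ => hg⟩
  choose gex hgex using hex0
  have hQne : ∀ n, Set.Nonempty (Q n) := fun n =>
    ⟨penalizedCost K μ (lam n) (fun i => if i = 0 then id else gex i),
      ⟨_, by simp, fun i hi => by simpa [hi] using hgex i hi, rfl⟩⟩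
  have hQnn : ∀ n, ∀ r ∈ Q n, 0 ≤ r := by
    intro n r hr
    obtain ⟨T', h0, hS', rfl⟩ := hr
    have h1 : 0 ≤ transportCost (μ 0) T' := tc_nonneg T'
    have h2 : 0 ≤ ∑ i ∈ s, lam n i * mmdSq K (Measure.map (T' i) (μ 0)) (μ i) :=
      Finset.sum_nonneg fun i hi => mul_nonneg (hlampos n i (hine i hi)).le
        (hmmdnn _ (hS' i (hine i hi)) i)
    show (0:ℝ) ≤ transportCost (μ 0) T'
      + ∑ i ∈ s, lam n i * mmdSq K (Measure.map (T' i) (μ 0)) (μ i)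
    linarith
  have hbdd : ∀ n, BddBelow (Q n) := fun n => ⟨0, fun r hr => hQnn n r hr⟩
  -- v n ≤ Mstar
  have hvle : ∀ n, v n ≤ Mstar := by
    intro n
    refine le_of_forall_pos_le_add fun δ hδ => ?_
    obtain ⟨ε, hε, hεM⟩ : ∃ ε : ℝ, 0 < ε ∧ ε * Mstar ≤ δ/4 :=
      ⟨δ/(4*(Mstar+1)), div_pos hδ (by linarith), by
        rw [div_mul_eq_mul_div, div_le_div_iff₀ (by linarith) (by norm_num)]
        nlinarith⟩
    have h1ε : 0 < 1 + 1/ε := by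
      have := one_div_pos.mpr hε; linarith
    obtain ⟨B, hB, hBval⟩ : ∃ B : ℝ, 0 < B ∧ B = 4*(1+1/ε)*(N:ℝ) :=
      ⟨4*(1+1/ε)*(N:ℝ), by nlinarith, rfl⟩
    obtain ⟨ηM, hηM, hBη⟩ : ∃ ηM : ℝ, 0 < ηM ∧ B*((N:ℝ)*ηM) ≤ δ/4 := by
      have h4 : (0:ℝ) < 4*(B*(N:ℝ)+1) := by nlinarith
      refine ⟨δ/(4*(B*(N:ℝ)+1)), div_pos hδ h4, ?_⟩
      rw [show B*((N:ℝ)*(δ/(4*(B*(N:ℝ)+1)))) = (B*(N:ℝ)*δ)/(4*(B*(N:ℝ)+1)) by ring,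
        div_le_div_iff₀ h4 (by norm_num)]
      nlinarith [mul_nonneg (mul_nonneg hB.le hNR.le) hδ.le]
    have hchoice : ∀ i : Fin N, ∃ g : EuclideanSpace ℝ (Fin d) → EuclideanSpace ℝ (Fin d), Measurable g ∧ MemLp g 2 (μ 0) ∧
        (i = 0 → g = id) ∧ (i ≠ 0 → g ∈ S) ∧
        (∫ x, ‖g x - Tstar i x‖^2 ∂(μ 0)) ≤ ηM ∧
        (i ≠ 0 → lam n i * mmdSq K (Measure.map g (μ 0)) (μ i) ≤ δ/(4*(N:ℝ))) := by
      intro i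
      by_cases hi : i = 0
      · subst hi
        refine ⟨id, measurable_id, hid2, fun _ => rfl, fun h => absurd rfl h, ?_,
          fun h => absurd rfl h⟩
        rw [hTstar0]
        simpa using hηM.le
      · have hlami := hlampos n i hi
        obtain ⟨θ, hθ, hcθ⟩ : ∃ θ : ℝ, 0 < θ ∧ lam n i * (2*CK*θ) ≤ δ/(4*(N:ℝ)) := by
          refine ⟨(δ/(4*(N:ℝ))) / (lam n i * (2*CK)),
            div_pos (div_pos hδ (by linarith)) (mul_pos hlami (by linarith)), ?_⟩
          rw [show lam n i * (2*CK*((δ/(4*(N:ℝ))) / (lam n i * (2*CK))))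
              = (lam n i * (2*CK)) * ((δ/(4*(N:ℝ))) / (lam n i * (2*CK))) by ring,
            mul_div_cancel₀ _ (by positivity)]
        obtain ⟨g, hgS, hgD⟩ := hSdense (Tstar i) (hTstarm i) (hTstarL2 i hi)
          (min ηM (θ^2)) (lt_min hηM (pow_pos hθ 2))
        have hgm := hSmeas g hgS
        have hgL2 := hSL2 g hgS
        refine ⟨g, hgm, hgL2, fun h => absurd h hi, fun _ => hgS,
          le_trans hgD.le (min_le_left _ _), fun _ => ?_⟩
        have hdiffL2 : MemLp (fun x => g x - Tstar i x) 2 (μ 0) := hgL2.sub (hTstarL2 i hi)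
        have hIint : Integrable (fun x => ‖g x - Tstar i x‖) (μ 0) :=
          (hdiffL2.integrable one_le_two).norm
        have hL1 : (∫ x, ‖g x - Tstar i x‖ ∂(μ 0)) ≤ θ :=
          L1_le (μ 0) _ hdiffL2 hθ (le_trans hgD.le (min_le_right _ _))
        have hmmdb : mmdSq K (Measure.map g (μ 0)) (μ i)
            ≤ 2*CK*∫ x, ‖g x - Tstar i x‖ ∂(μ 0) := by
          rw [← hTstarpush i hi]
          exact mmd_le (μ 0) K hKm hKb hKlip g (Tstar i) hgm (hTstarm i) hIint
        have h2 : mmdSq K (Measure.map g (μ 0)) (μ i) ≤ 2*CK*θ :=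
          le_trans hmmdb (by nlinarith)
        calc lam n i * mmdSq K (Measure.map g (μ 0)) (μ i) ≤ lam n i * (2*CK*θ) :=
              mul_le_mul_of_nonneg_left h2 hlami.le
          _ ≤ δ/(4*(N:ℝ)) := hcθ
    choose g hgm hgL2 hgid hgS hgD hgmmd using hchoice
    have hT'0 : g 0 = id := hgid 0 rfl
    have hmem : penalizedCost K μ (lam n) g ∈ Q n := ⟨g, hT'0, fun i hi => hgS i hi, rfl⟩
    refine le_trans (csInf_le (hbdd n) hmem) ?_
    have hcost : transportCost (μ 0) g
        ≤ (1+ε)*Mstar + B * ∑ i, ∫ x, ‖g i x - Tstar i x‖^2 ∂(μ 0) := by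
      have hTstarL2' : ∀ i : Fin N, MemLp (Tstar i) 2 (μ 0) := by
        intro i
        by_cases hi : i = 0
        · rw [hi, hTstar0]; exact hid2
        · exact hTstarL2 i hi
      rw [hBval]
      exact cost_le (μ 0) g Tstar hgL2 hTstarL2' ε hε
    have hsumD : (∑ i, ∫ x, ‖g i x - Tstar i x‖^2 ∂(μ 0)) ≤ (N:ℝ) * ηM := by
      calc (∑ i, ∫ x, ‖g i x - Tstar i x‖^2 ∂(μ 0)) ≤ ∑ _i : Fin N, ηM :=
            Finset.sum_le_sum fun i _ => hgD i
        _ = (N:ℝ) * ηM := by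
            rw [Finset.sum_const, Finset.card_univ, Fintype.card_fin, nsmul_eq_mul]
    have hBsum : B * (∑ i, ∫ x, ‖g i x - Tstar i x‖^2 ∂(μ 0)) ≤ B * ((N:ℝ) * ηM) :=
      mul_le_mul_of_nonneg_left hsumD hB.le
    have hmmdsum : (∑ i ∈ s, lam n i * mmdSq K (Measure.map (g i) (μ 0)) (μ i)) ≤ δ/4 := by
      have hcard : ((s.card : ℕ) : ℝ) ≤ (N:ℝ) := by
        have : s.card ≤ N := le_trans (Finset.card_le_univ s) (by simp)
        exact_mod_cast this
      calc (∑ i ∈ s, lam n i * mmdSq K (Measure.map (g i) (μ 0)) (μ i))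
          ≤ ∑ _i ∈ s, δ/(4*(N:ℝ)) := Finset.sum_le_sum fun i hi => hgmmd i (hine i hi)
        _ = (s.card : ℝ) * (δ/(4*(N:ℝ))) := by rw [Finset.sum_const, nsmul_eq_mul]
        _ ≤ (N:ℝ) * (δ/(4*(N:ℝ))) :=
            mul_le_mul_of_nonneg_right hcard (le_of_lt (div_pos hδ (by linarith)))
        _ = δ/4 := by field_simp
    show transportCost (μ 0) g
        + ∑ i ∈ s, lam n i * mmdSq K (Measure.map (g i) (μ 0)) (μ i) ≤ Mstar + δ
    have hexp : (1+ε)*Mstar = Mstar + ε*Mstar := by ring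
    linarith
  -- monotonicity
  have hvmono : ∀ m n : ℕ, m ≤ n → v m ≤ v n := by
    intro m n hmn
    refine le_csInf (hQne n) fun r hr => ?_
    obtain ⟨T', h0, hS', rfl⟩ := hr
    refine le_trans (csInf_le (hbdd m) ⟨T', h0, hS', rfl⟩) ?_
    show transportCost (μ 0) T' + ∑ i ∈ s, lam m i * mmdSq K (Measure.map (T' i) (μ 0)) (μ i)
      ≤ transportCost (μ 0) T' + ∑ i ∈ s, lam n i * mmdSq K (Measure.map (T' i) (μ 0)) (μ i)
    refine add_le_add le_rfl (Finset.sum_le_sum fun i hi => ?_)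
    exact mul_le_mul_of_nonneg_right (hlammono i (hine i hi) hmn)
      (hmmdnn _ (hS' i (hine i hi)) i)
  have hVbdd : BddAbove (Set.range v) := ⟨Mstar, by rintro r ⟨n, rfl⟩; exact hvle n⟩
  set V := ⨆ n, v n with hVdef
  have hvleV : ∀ n, v n ≤ V := fun n => le_ciSup hVbdd n
  rw [Metric.tendsto_atTop]
  intro ε' hε'
  set δ4 := ε'/8 with hδ4def
  have hδ4 : 0 < δ4 := by positivity
  obtain ⟨m, hm⟩ := exists_lt_of_lt_ciSup (show V - δ4 < ⨆ n, v n by rw [← hVdef]; linarith)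
  have h1 : ∀ᶠ n in atTop, eps n < δ4 := hepslim.eventually_lt_const hδ4
  have h2 : ∀ᶠ n in atTop, ∀ i ∈ s, 2 * lam m i ≤ lam n i := by
    rw [eventually_all_finset]
    exact fun i hi => (hlamtop i (hine i hi)).eventually_ge_atTop _
  have h3 : ∀ᶠ n in atTop, m ≤ n := eventually_ge_atTop m
  obtain ⟨n0, hn0⟩ := eventually_atTop.mp ((h1.and h2).and h3)
  refine ⟨n0, fun n hn => ?_⟩
  obtain ⟨⟨he, hll⟩, hmn⟩ := hn0 n hn
  have hmmdTn : ∀ i ∈ s, 0 ≤ mmdSq K (Measure.map (T n i) (μ 0)) (μ i) :=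
    fun i hi => hmmdnn _ (hTS n i (hine i hi)) i
  have hPnn : 0 ≤ ∑ i ∈ s, lam n i * mmdSq K (Measure.map (T n i) (μ 0)) (μ i) :=
    Finset.sum_nonneg fun i hi => mul_nonneg (hlampos n i (hine i hi)).le (hmmdTn i hi)
  have hlow : v m ≤ transportCost (μ 0) (T n)
      + ∑ i ∈ s, lam m i * mmdSq K (Measure.map (T n i) (μ 0)) (μ i) :=
    csInf_le (hbdd m) ⟨T n, hT0 n, fun i hi => hTS n i hi, rfl⟩
  have hup := hTopt' n
  have hvnV := hvleV n
  have hdiff : ∑ i ∈ s, (lam n i - lam m i) * mmdSq K (Measure.map (T n i) (μ 0)) (μ i)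
      ≤ δ4 + eps n := by
    have hsplit : ∑ i ∈ s, (lam n i - lam m i) * mmdSq K (Measure.map (T n i) (μ 0)) (μ i)
        = (∑ i ∈ s, lam n i * mmdSq K (Measure.map (T n i) (μ 0)) (μ i))
          - ∑ i ∈ s, lam m i * mmdSq K (Measure.map (T n i) (μ 0)) (μ i) := by
      rw [← Finset.sum_sub_distrib]
      exact Finset.sum_congr rfl fun i _ => by ring
    rw [hsplit]
    linarith
  have hhalf : ∑ i ∈ s, lam n i * mmdSq K (Measure.map (T n i) (μ 0)) (μ i)
      ≤ 2 * ∑ i ∈ s, (lam n i - lam m i) * mmdSq K (Measure.map (T n i) (μ 0)) (μ i) := by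
    rw [Finset.mul_sum]
    refine Finset.sum_le_sum fun i hi => ?_
    have h2l := hll i hi
    have hmm := hmmdTn i hi
    have hco : lam n i ≤ 2*(lam n i - lam m i) := by linarith
    calc lam n i * mmdSq K (Measure.map (T n i) (μ 0)) (μ i)
        ≤ (2*(lam n i - lam m i)) * mmdSq K (Measure.map (T n i) (μ 0)) (μ i) :=
          mul_le_mul_of_nonneg_right hco hmm
      _ = 2*((lam n i - lam m i) * mmdSq K (Measure.map (T n i) (μ 0)) (μ i)) := by ring
  rw [Real.dist_eq, sub_zero, abs_of_nonneg hPnn]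
  linarith
end

section
/- Under the hypotheses of the penalized convergence theorem — namely: N ≥ 2; μ_1, …, μ_N Borel probability measures on ℝ^d with finite second moments; K : ℝ^d × ℝ^d → ℝ bounded, Borel measurable, symmetric, Lipschitz with constant C_K > 0, with γ²_K(μ, ν) ≥ 0 for all Borel probability measures μ, ν; S ⊆ L²(μ_1; ℝ^d) dense; Borel maps T*_2, …, T*_N ∈ L²(μ_1; ℝ^d) with T*_i♯μ_1 = μ_i; λ_i^n > 0 nondecreasing with λ_i^n → ∞; ε^n > 0 nonincreasing with ε^n → 0; and T^n = (id, T_2^n, …, T_N^n) with T_i^n ∈ S satisfying M_{λ^n}(T^n) ≤ inf { M_{λ^n}(T) : T = (id, T_2, …, T_N), T_i ∈ S } + ε^n — assume additionally that γ_K metrizes weak convergence in the following sense: for any Borel probability measures ν_n, ν on ℝ^d, γ²_K(ν_n, ν) → 0 implies ν_n converges weakly to ν. Then for each i = 2, …, N, the pushforward measures T_i^n♯μ_1 converge weakly to μ_i as n → ∞. -/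
open MeasureTheory Filter

section Helpers

open Filter

variable {d : ℕ}

local notation "E" => EuclideanSpace ℝ (Fin d)

lemma aux_integrable_of_bdd {μ0 : Measure E} [IsFiniteMeasure μ0] {F : E → ℝ}
    (hF : AEStronglyMeasurable F μ0) {C : ℝ} (h : ∀ x, |F x| ≤ C) : Integrable F μ0 :=
  (integrable_const C).mono' hF (ae_of_all _ fun x => by simpa [Real.norm_eq_abs] using h x)

lemma aux_integral_norm_le_of_sq {μ0 : Measure E} [IsProbabilityMeasure μ0] {u : E → ℝ}
    (hu : Integrable u μ0) (hu2 : Integrable (fun x => u x ^ 2) μ0)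
    {s : ℝ} (hs : 0 < s) (h : ∫ x, u x ^ 2 ∂μ0 ≤ s ^ 2) : ∫ x, u x ∂μ0 ≤ s := by
  have hmono : ∫ x, u x ∂μ0 ≤ ∫ x, (s ^ 2 + u x ^ 2) / (2 * s) ∂μ0 := by
    refine integral_mono hu (((integrable_const _).add hu2).div_const _) fun x => ?_
    rw [le_div_iff₀ (by positivity)]
    nlinarith [sq_nonneg (s - u x)]
  have hcalc : ∫ x, (s ^ 2 + u x ^ 2) / (2 * s) ∂μ0 = (s ^ 2 + ∫ x, u x ^ 2 ∂μ0) / (2 * s) := by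
    rw [integral_div, integral_add (integrable_const _) hu2, integral_const]
    simp
  rw [hcalc] at hmono
  refine hmono.trans ?_
  rw [div_le_iff₀ (by positivity)]
  nlinarith

lemma aux_int_sq_sub {μ0 : Measure E} [IsFiniteMeasure μ0] {f h : E → E}
    (hf : MemLp f 2 μ0) (hh : MemLp h 2 μ0) :
    Integrable (fun x => ‖f x - h x‖ ^ 2) μ0 := by
  have hsub := hf.sub hh
  have := (memLp_two_iff_integrable_sq_norm hsub.aestronglyMeasurable).mp hsub
  simpa [Pi.sub_apply] using this

lemma aux_mmdSq_map_le {μ0 : Measure E} [IsProbabilityMeasure μ0]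
    {K : E → E → ℝ} (hKm : Measurable (Function.uncurry K))
    {C : ℝ} (hKb : ∀ x y, |K x y| ≤ C)
    {CK : ℝ}
    (hKlip : ∀ x x' y y', |K x y - K x' y'| ≤ CK * (‖x - x'‖ + ‖y - y'‖))
    {g h : E → E} (hg : Measurable g) (hh : Measurable h)
    (hint : Integrable (fun x => ‖g x - h x‖) μ0) :
    mmdSq K (Measure.map g μ0) (Measure.map h μ0) ≤ 2 * CK * ∫ x, ‖g x - h x‖ ∂μ0 := by
  have hslice : ∀ (f2 : E → E), Measurable f2 → ∀ x : E, Measurable fun y => K x (f2 y) := by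
    intro f2 hf2 x
    exact (hKm.comp (measurable_const.prodMk measurable_id)).comp hf2
  have hker : ∀ (f1 f2 : E → E), Measurable f1 → Measurable f2 →
      Measurable fun p : E × E => K (f1 p.1) (f2 p.2) := by
    intro f1 f2 hf1 hf2
    exact hKm.comp ((hf1.comp measurable_fst).prodMk (hf2.comp measurable_snd))
  have houter_meas : ∀ (f1 f2 : E → E), Measurable f1 → Measurable f2 →
      StronglyMeasurable fun x => ∫ y, K (f1 x) (f2 y) ∂μ0 := by
    intro f1 f2 hf1 hf2
    have : StronglyMeasurable (Function.uncurry fun x y => K (f1 x) (f2 y)) :=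
      (hker f1 f2 hf1 hf2).stronglyMeasurable
    exact this.integral_prod_right
  have key : ∀ (f1 f2 : E → E), Measurable f1 → Measurable f2 →
      (∫ x, ∫ y, K x y ∂(Measure.map f2 μ0) ∂(Measure.map f1 μ0)) =
        ∫ x, ∫ y, K (f1 x) (f2 y) ∂μ0 ∂μ0 := by
    intro f1 f2 hf1 hf2
    have h1 : ∀ x : E, (∫ y, K x y ∂(Measure.map f2 μ0)) = ∫ y, K x (f2 y) ∂μ0 := by
      intro x
      exact integral_map hf2.aemeasurable
        ((hKm.comp (measurable_const.prodMk measurable_id)).aestronglyMeasurable)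
    calc (∫ x, ∫ y, K x y ∂(Measure.map f2 μ0) ∂(Measure.map f1 μ0))
        = ∫ x, ∫ y, K x (f2 y) ∂μ0 ∂(Measure.map f1 μ0) := by
          simp_rw [h1]
      _ = ∫ x, ∫ y, K (f1 x) (f2 y) ∂μ0 ∂μ0 := by
          refine integral_map hf1.aemeasurable ?_
          exact (houter_meas id f2 measurable_id hf2).aestronglyMeasurable
  have hinner_bdd : ∀ (f1 f2 : E → E) (x : E), |∫ y, K (f1 x) (f2 y) ∂μ0| ≤ C := by
    intro f1 f2 x
    have := norm_integral_le_of_norm_le_const (μ := μ0)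
      (f := fun y => K (f1 x) (f2 y)) (C := C) (ae_of_all _ fun y => by
        simpa [Real.norm_eq_abs] using hKb (f1 x) (f2 y))
    simpa [Real.norm_eq_abs] using this
  have hinner_int : ∀ (f1 f2 : E → E), Measurable f1 → Measurable f2 → ∀ x : E,
      Integrable (fun y => K (f1 x) (f2 y)) μ0 := by
    intro f1 f2 hf1 hf2 x
    exact aux_integrable_of_bdd ((hslice f2 hf2 (f1 x))).aestronglyMeasurable (fun y => hKb _ _)
  have houter_int : ∀ (f1 f2 : E → E), Measurable f1 → Measurable f2 →
      Integrable (fun x => ∫ y, K (f1 x) (f2 y) ∂μ0) μ0 := by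
    intro f1 f2 hf1 hf2
    refine aux_integrable_of_bdd ?_ (fun x => hinner_bdd f1 f2 x)
    exact ((houter_meas f1 f2 hf1 hf2)).aestronglyMeasurable
  set I := ∫ x, ‖g x - h x‖ ∂μ0 with hI
  have hdiff1 : (∫ x, ∫ y, K (g x) (g y) ∂μ0 ∂μ0) - (∫ x, ∫ y, K (g x) (h y) ∂μ0 ∂μ0)
      ≤ CK * I := by
    rw [← integral_sub (houter_int g g hg hg) (houter_int g h hg hh)]
    have hpt : ∀ x : E, (∫ y, K (g x) (g y) ∂μ0) - (∫ y, K (g x) (h y) ∂μ0) ≤ CK * I := by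
      intro x
      rw [← integral_sub (hinner_int g g hg hg x) (hinner_int g h hg hh x)]
      have : (∫ y, (K (g x) (g y) - K (g x) (h y)) ∂μ0) ≤ ∫ y, CK * ‖g y - h y‖ ∂μ0 := by
        refine integral_mono ((hinner_int g g hg hg x).sub (hinner_int g h hg hh x))
          (hint.const_mul CK) fun y => ?_
        have := hKlip (g x) (g x) (g y) (h y)
        simp only [sub_self, norm_zero, zero_add] at this
        exact (le_abs_self _).trans this
      rw [integral_const_mul] at this
      exact this
    calc (∫ x, ((∫ y, K (g x) (g y) ∂μ0) - ∫ y, K (g x) (h y) ∂μ0) ∂μ0)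
        ≤ ∫ _x, CK * I ∂μ0 := by
          refine integral_mono ((houter_int g g hg hg).sub (houter_int g h hg hh))
            (integrable_const _) hpt
      _ = CK * I := by simp
  have hdiff2 : (∫ x, ∫ y, K (h x) (h y) ∂μ0 ∂μ0) - (∫ x, ∫ y, K (g x) (h y) ∂μ0 ∂μ0)
      ≤ CK * I := by
    rw [← integral_sub (houter_int h h hh hh) (houter_int g h hg hh)]
    have hpt : ∀ x : E, (∫ y, K (h x) (h y) ∂μ0) - (∫ y, K (g x) (h y) ∂μ0)
        ≤ CK * ‖g x - h x‖ := by
      intro x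
      rw [← integral_sub (hinner_int h h hh hh x) (hinner_int g h hg hh x)]
      have : (∫ y, (K (h x) (h y) - K (g x) (h y)) ∂μ0) ≤ ∫ _y, CK * ‖g x - h x‖ ∂μ0 := by
        refine integral_mono ((hinner_int h h hh hh x).sub (hinner_int g h hg hh x))
          (integrable_const _) fun y => ?_
        have := hKlip (h x) (g x) (h y) (h y)
        simp only [sub_self, norm_zero, add_zero] at this
        refine (le_abs_self _).trans (this.trans ?_)
        rw [norm_sub_rev]
      simpa using this
    calc (∫ x, ((∫ y, K (h x) (h y) ∂μ0) - ∫ y, K (g x) (h y) ∂μ0) ∂μ0)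
        ≤ ∫ x, CK * ‖g x - h x‖ ∂μ0 := by
          refine integral_mono ((houter_int h h hh hh).sub (houter_int g h hg hh))
            (hint.const_mul CK) hpt
      _ = CK * I := by rw [integral_const_mul]
  have e1 := key g g hg hg
  have e2 := key g h hg hh
  have e3 := key h h hh hh
  rw [mmdSq, e1, e2, e3]
  linarith

lemma aux_transportCost_nonneg {N : ℕ} (μ1 : Measure E)
    (T : Fin N → E → E) : 0 ≤ transportCost μ1 T := by
  refine integral_nonneg fun x => Finset.sum_nonneg fun i _ => Finset.sum_nonneg fun j _ => ?_
  split <;> positivity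

lemma aux_transport_bound {N : ℕ} {μ0 : Measure E} [IsProbabilityMeasure μ0]
    {G Tst : Fin N → E → E}
    (hG2 : ∀ j, MemLp (G j) 2 μ0) (hT2 : ∀ j, MemLp (Tst j) 2 μ0)
    (hclose : ∀ j, ∫ x, ‖G j x - Tst j x‖ ^ 2 ∂μ0 ≤ 1) :
    transportCost μ0 G ≤ ∑ j : Fin N, ∑ k : Fin N,
      (if j < k then 3 * (2 + ∫ x, ‖Tst j x - Tst k x‖ ^ 2 ∂μ0) else 0) := by
  have hint : ∀ j k : Fin N,
      Integrable (fun x => if j < k then ‖G j x - G k x‖ ^ 2 else 0) μ0 := by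
    intro j k
    by_cases hjk : j < k
    · simpa [hjk] using aux_int_sq_sub (hG2 j) (hG2 k)
    · simpa [hjk] using integrable_const (0 : ℝ) (μ := μ0)
  rw [transportCost, integral_finset_sum _ (fun j _ => integrable_finset_sum _ fun k _ => hint j k)]
  refine Finset.sum_le_sum fun j _ => ?_
  rw [integral_finset_sum _ (fun k _ => hint j k)]
  refine Finset.sum_le_sum fun k _ => ?_
  by_cases hjk : j < k
  · simp only [if_pos hjk]
    have hpt : ∀ x, ‖G j x - G k x‖ ^ 2 ≤
        3 * (‖G j x - Tst j x‖ ^ 2 + ‖Tst j x - Tst k x‖ ^ 2 + ‖Tst k x - G k x‖ ^ 2) := by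
      intro x
      have h1 : ‖G j x - G k x‖ ≤
          ‖G j x - Tst j x‖ + ‖Tst j x - Tst k x‖ + ‖Tst k x - G k x‖ := by
        simpa [dist_eq_norm] using dist_triangle4 (G j x) (Tst j x) (Tst k x) (G k x)
      have h2 := mul_le_mul h1 h1 (norm_nonneg _) (by positivity)
      nlinarith [sq_nonneg (‖G j x - Tst j x‖ - ‖Tst j x - Tst k x‖),
        sq_nonneg (‖G j x - Tst j x‖ - ‖Tst k x - G k x‖),
        sq_nonneg (‖Tst j x - Tst k x‖ - ‖Tst k x - G k x‖)]
    have hR : Integrable (fun x =>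
        3 * (‖G j x - Tst j x‖ ^ 2 + ‖Tst j x - Tst k x‖ ^ 2 + ‖Tst k x - G k x‖ ^ 2)) μ0 :=
      (((aux_int_sq_sub (hG2 j) (hT2 j)).add (aux_int_sq_sub (hT2 j) (hT2 k))).add
        (aux_int_sq_sub (hT2 k) (hG2 k))).const_mul 3
    have hm := integral_mono (aux_int_sq_sub (hG2 j) (hG2 k)) hR hpt
    have iA : Integrable (fun x => ‖G j x - Tst j x‖ ^ 2) μ0 := aux_int_sq_sub (hG2 j) (hT2 j)
    have iB : Integrable (fun x => ‖Tst j x - Tst k x‖ ^ 2) μ0 := aux_int_sq_sub (hT2 j) (hT2 k)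
    have iC : Integrable (fun x => ‖Tst k x - G k x‖ ^ 2) μ0 := aux_int_sq_sub (hT2 k) (hG2 k)
    have iAB : Integrable (fun x => ‖G j x - Tst j x‖ ^ 2 + ‖Tst j x - Tst k x‖ ^ 2) μ0 :=
      iA.add iB
    have heq : (∫ x, 3 * (‖G j x - Tst j x‖ ^ 2 + ‖Tst j x - Tst k x‖ ^ 2 +
        ‖Tst k x - G k x‖ ^ 2) ∂μ0) =
        3 * ((∫ x, ‖G j x - Tst j x‖ ^ 2 ∂μ0) + (∫ x, ‖Tst j x - Tst k x‖ ^ 2 ∂μ0) +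
          ∫ x, ‖Tst k x - G k x‖ ^ 2 ∂μ0) := by
      rw [integral_const_mul, integral_add iAB iC, integral_add iA iB]
    rw [heq] at hm
    have hc1 : (∫ x, ‖G j x - Tst j x‖ ^ 2 ∂μ0) ≤ 1 := hclose j
    have hc2 : (∫ x, ‖Tst k x - G k x‖ ^ 2 ∂μ0) ≤ 1 := by
      have : (fun x => ‖Tst k x - G k x‖ ^ 2) = fun x => ‖G k x - Tst k x‖ ^ 2 := by
        funext x; rw [norm_sub_rev]
      rw [this]; exact hclose k
    refine hm.trans ?_
    linarith
  · simp [hjk]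

lemma aux_penalizedCost_nonneg {N : ℕ} [NeZero N]
    {K : E → E → ℝ}
    {μ : Fin N → Measure E} [∀ i, IsProbabilityMeasure (μ i)]
    (hKpos : ∀ μ' ν' : Measure E,
      IsProbabilityMeasure μ' → IsProbabilityMeasure ν' → 0 ≤ mmdSq K μ' ν')
    {lam : Fin N → ℝ} (hlam : ∀ j : Fin N, j ≠ 0 → 0 ≤ lam j)
    {T' : Fin N → E → E} (hT'm : ∀ j : Fin N, j ≠ 0 → Measurable (T' j)) :
    0 ≤ penalizedCost K μ lam T' := by
  refine add_nonneg (aux_transportCost_nonneg _ _) (Finset.sum_nonneg fun j hj => ?_)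
  have hj0 : j ≠ 0 := by
    simp only [Finset.mem_sdiff, Finset.mem_univ, Finset.mem_singleton, true_and] at hj
    exact hj
  have : IsProbabilityMeasure (Measure.map (T' j) (μ 0)) :=
    Measure.isProbabilityMeasure_map (hT'm j hj0).aemeasurable
  exact mul_nonneg (hlam j hj0) (hKpos _ _ this inferInstance)

end Helpers

/-- If moreover `γ_K` metrizes weak convergence, then the marginals of the `ε^n`-optimal
tuples converge weakly: `T_i^n♯μ₁ → μ_i` against every bounded continuous test function. -/
theorem stmt_13 (d N : ℕ) [NeZero N] (hN : 2 ≤ N)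
    (μ : Fin N → Measure (EuclideanSpace ℝ (Fin d)))
    [∀ i, IsProbabilityMeasure (μ i)]
    (hmom : ∀ i, Integrable (fun x => ‖x‖ ^ 2) (μ i))
    (K : EuclideanSpace ℝ (Fin d) → EuclideanSpace ℝ (Fin d) → ℝ)
    (hKm : Measurable (Function.uncurry K))
    (hKbdd : ∃ C, ∀ x y, |K x y| ≤ C)
    (hKsymm : ∀ x y, K x y = K y x)
    (CK : ℝ) (hCK : 0 < CK)
    (hKlip : ∀ x x' y y', |K x y - K x' y'| ≤ CK * (‖x - x'‖ + ‖y - y'‖))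
    (hKpos : ∀ μ' ν' : Measure (EuclideanSpace ℝ (Fin d)),
      IsProbabilityMeasure μ' → IsProbabilityMeasure ν' → 0 ≤ mmdSq K μ' ν')
    (hKmetrize : ∀ (νs : ℕ → Measure (EuclideanSpace ℝ (Fin d)))
        (ν : Measure (EuclideanSpace ℝ (Fin d))),
      (∀ n, IsProbabilityMeasure (νs n)) → IsProbabilityMeasure ν →
      Tendsto (fun n => mmdSq K (νs n) ν) atTop (nhds 0) →
      ∀ f : BoundedContinuousFunction (EuclideanSpace ℝ (Fin d)) ℝ,
        Tendsto (fun n => ∫ x, f x ∂(νs n)) atTop (nhds (∫ x, f x ∂ν)))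
    (S : Set (EuclideanSpace ℝ (Fin d) → EuclideanSpace ℝ (Fin d)))
    (hSmeas : ∀ f ∈ S, Measurable f)
    (hSL2 : ∀ f ∈ S, MemLp f 2 (μ 0))
    (hSdense : ∀ f : EuclideanSpace ℝ (Fin d) → EuclideanSpace ℝ (Fin d),
      Measurable f → MemLp f 2 (μ 0) → ∀ ε > 0,
        ∃ g ∈ S, ∫ x, ‖g x - f x‖ ^ 2 ∂(μ 0) < ε)
    (Tstar : Fin N → EuclideanSpace ℝ (Fin d) → EuclideanSpace ℝ (Fin d))
    (hTstar0 : Tstar 0 = id)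
    (hTstarm : ∀ i, Measurable (Tstar i))
    (hTstarL2 : ∀ i, i ≠ 0 → MemLp (Tstar i) 2 (μ 0))
    (hTstarpush : ∀ i, i ≠ 0 → Measure.map (Tstar i) (μ 0) = μ i)
    (lam : ℕ → Fin N → ℝ)
    (hlampos : ∀ n, ∀ i, i ≠ 0 → 0 < lam n i)
    (hlammono : ∀ i, i ≠ 0 → Monotone fun n => lam n i)
    (hlamtop : ∀ i, i ≠ 0 → Tendsto (fun n => lam n i) atTop atTop)
    (eps : ℕ → ℝ)
    (hepspos : ∀ n, 0 < eps n)
    (hepsanti : Antitone eps)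
    (hepslim : Tendsto eps atTop (nhds 0))
    (T : ℕ → Fin N → EuclideanSpace ℝ (Fin d) → EuclideanSpace ℝ (Fin d))
    (hT0 : ∀ n, T n 0 = id)
    (hTS : ∀ n, ∀ i, i ≠ 0 → T n i ∈ S)
    (hTopt : ∀ n, penalizedCost K μ (lam n) (T n) ≤
      sInf {r : ℝ |
          ∃ T' : Fin N → EuclideanSpace ℝ (Fin d) → EuclideanSpace ℝ (Fin d),
            T' 0 = id ∧ (∀ i, i ≠ 0 → T' i ∈ S) ∧ r = penalizedCost K μ (lam n) T'} +
        eps n) :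
    ∀ i, i ≠ 0 →
      ∀ f : BoundedContinuousFunction (EuclideanSpace ℝ (Fin d)) ℝ,
        Tendsto (fun n => ∫ x, f x ∂(Measure.map (T n i) (μ 0))) atTop
          (nhds (∫ x, f x ∂(μ i))) := by
  intro i hi f
  obtain ⟨C, hC⟩ := hKbdd
  have hCK0 : (0 : ℝ) ≤ CK := hCK.le
  -- MemLp of all the Tstar maps (including the identity at index 0)
  have hidL2 : MemLp (id : EuclideanSpace ℝ (Fin d) → EuclideanSpace ℝ (Fin d)) 2 (μ 0) := by
    refine (memLp_two_iff_integrable_sq_norm aestronglyMeasurable_id).mpr ?_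
    simpa using hmom 0
  have hTstarL2' : ∀ j : Fin N, MemLp (Tstar j) 2 (μ 0) := by
    intro j
    by_cases hj : j = 0
    · subst hj; rw [hTstar0]; exact hidL2
    · exact hTstarL2 j hj
  -- the scale sequence
  set s : ℕ → Fin N → ℝ := fun n j => min 1 (lam n j)⁻¹ with hs_def
  have hspos : ∀ n (j : Fin N), j ≠ 0 → 0 < s n j := fun n j hj =>
    lt_min one_pos (inv_pos.mpr (hlampos n j hj))
  have hsle1 : ∀ n (j : Fin N), s n j ≤ 1 := fun n j => min_le_left _ _
  have hsinv : ∀ n (j : Fin N), s n j ≤ (lam n j)⁻¹ := fun n j => min_le_right _ _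
  -- choose near-optimal approximations from S
  have hchoice : ∀ n (j : Fin N), ∃ g : EuclideanSpace ℝ (Fin d) → EuclideanSpace ℝ (Fin d),
      (j = 0 → g = id) ∧
      (j ≠ 0 → g ∈ S ∧ ∫ x, ‖g x - Tstar j x‖ ^ 2 ∂(μ 0) < (s n j) ^ 2) := by
    intro n j
    by_cases hj : j = 0
    · exact ⟨id, fun _ => rfl, fun h => absurd hj h⟩
    · obtain ⟨g, hgS, hgd⟩ := hSdense (Tstar j) (hTstarm j) (hTstarL2 j hj)
        ((s n j) ^ 2) (by have := hspos n j hj; positivity)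
      exact ⟨g, fun h => absurd h hj, fun _ => ⟨hgS, hgd⟩⟩
  choose G hG0 hGS using hchoice
  have hGmeas : ∀ n (j : Fin N), Measurable (G n j) := by
    intro n j
    by_cases hj : j = 0
    · rw [hG0 n j hj]; exact measurable_id
    · exact hSmeas _ (hGS n j hj).1
  have hGL2 : ∀ n (j : Fin N), MemLp (G n j) 2 (μ 0) := by
    intro n j
    by_cases hj : j = 0
    · rw [hG0 n j hj]; exact hidL2
    · exact hSL2 _ (hGS n j hj).1
  have hGclose1 : ∀ n (j : Fin N), ∫ x, ‖G n j x - Tstar j x‖ ^ 2 ∂(μ 0) ≤ 1 := by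
    intro n j
    by_cases hj : j = 0
    · subst hj
      rw [hG0 n 0 rfl, hTstar0]
      simp
    · calc ∫ x, ‖G n j x - Tstar j x‖ ^ 2 ∂(μ 0) ≤ (s n j) ^ 2 := ((hGS n j hj).2).le
        _ ≤ 1 ^ 2 := by
            have h1 := hsle1 n j
            have h2 := (hspos n j hj).le
            nlinarith
        _ = 1 := one_pow 2
  -- L¹ closeness
  have hGcloseL1 : ∀ n (j : Fin N), j ≠ 0 → ∫ x, ‖G n j x - Tstar j x‖ ∂(μ 0) ≤ s n j := by
    intro n j hj
    have hmem := (hGL2 n j).sub (hTstarL2' j)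
    have hu : Integrable (fun x => ‖G n j x - Tstar j x‖) (μ 0) := by
      have := (hmem.integrable one_le_two).norm
      simpa [Pi.sub_apply] using this
    exact aux_integral_norm_le_of_sq hu (aux_int_sq_sub (hGL2 n j) (hTstarL2' j))
      (hspos n j hj) ((hGS n j hj).2).le
  -- the uniform transport bound
  set M : ℝ := ∑ j : Fin N, ∑ k : Fin N,
    (if j < k then 3 * (2 + ∫ x, ‖Tstar j x - Tstar k x‖ ^ 2 ∂(μ 0)) else 0) with hM_def
  have htrans : ∀ n, transportCost (μ 0) (G n) ≤ M :=
    fun n => aux_transport_bound (hGL2 n) hTstarL2' (hGclose1 n)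
  -- the mmd bound for the candidates
  have hmmdG : ∀ n (j : Fin N), j ≠ 0 →
      lam n j * mmdSq K (Measure.map (G n j) (μ 0)) (μ j) ≤ 2 * CK := by
    intro n j hj
    have hmem := (hGL2 n j).sub (hTstarL2' j)
    have hu : Integrable (fun x => ‖G n j x - Tstar j x‖) (μ 0) := by
      have := (hmem.integrable one_le_two).norm
      simpa [Pi.sub_apply] using this
    have hb : mmdSq K (Measure.map (G n j) (μ 0)) (μ j) ≤
        2 * CK * ∫ x, ‖G n j x - Tstar j x‖ ∂(μ 0) := by
      rw [← hTstarpush j hj]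
      exact aux_mmdSq_map_le hKm hC hKlip (hGmeas n j) (hTstarm j) hu
    have hlb : 0 < lam n j := hlampos n j hj
    calc lam n j * mmdSq K (Measure.map (G n j) (μ 0)) (μ j)
        ≤ lam n j * (2 * CK * ∫ x, ‖G n j x - Tstar j x‖ ∂(μ 0)) := by
          exact mul_le_mul_of_nonneg_left hb hlb.le
      _ ≤ lam n j * (2 * CK * s n j) := by
          refine mul_le_mul_of_nonneg_left ?_ hlb.le
          exact mul_le_mul_of_nonneg_left (hGcloseL1 n j hj) (by positivity)
      _ = 2 * CK * (lam n j * s n j) := by ring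
      _ ≤ 2 * CK * 1 := by
          refine mul_le_mul_of_nonneg_left ?_ (by positivity)
          calc lam n j * s n j ≤ lam n j * (lam n j)⁻¹ :=
              mul_le_mul_of_nonneg_left (hsinv n j) hlb.le
            _ = 1 := mul_inv_cancel₀ hlb.ne'
      _ = 2 * CK := mul_one _
  -- bound on the penalized cost of the candidate
  have hpenG : ∀ n, penalizedCost K μ (lam n) (G n) ≤ M + N * (2 * CK) := by
    intro n
    rw [penalizedCost]
    have hsum : (∑ j ∈ Finset.univ \ {0},
        lam n j * mmdSq K (Measure.map (G n j) (μ 0)) (μ j)) ≤ N * (2 * CK) := by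
      calc (∑ j ∈ Finset.univ \ {0},
            lam n j * mmdSq K (Measure.map (G n j) (μ 0)) (μ j))
          ≤ ∑ _j ∈ (Finset.univ \ {0} : Finset (Fin N)), (2 * CK) := by
            refine Finset.sum_le_sum fun j hj => ?_
            have hj0 : j ≠ 0 := by
              simp only [Finset.mem_sdiff, Finset.mem_univ, Finset.mem_singleton, true_and] at hj
              exact hj
            exact hmmdG n j hj0
        _ = ((Finset.univ \ {0} : Finset (Fin N)).card : ℝ) * (2 * CK) := by
            rw [Finset.sum_const, nsmul_eq_mul]
        _ ≤ N * (2 * CK) := by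
            refine mul_le_mul_of_nonneg_right ?_ (by positivity)
            have : (Finset.univ \ {0} : Finset (Fin N)).card ≤ Fintype.card (Fin N) :=
              Finset.card_le_card (Finset.subset_univ _)
            simpa using (Nat.cast_le.mpr this : ((Finset.univ \ {0} : Finset (Fin N)).card : ℝ) ≤ _)
    linarith [htrans n]
  -- the chain of inequalities
  have hchain : ∀ n, lam n i * mmdSq K (Measure.map (T n i) (μ 0)) (μ i)
      ≤ M + N * (2 * CK) + eps 0 := by
    intro n
    have hprob : ∀ j : Fin N, j ≠ 0 → IsProbabilityMeasure (Measure.map (T n j) (μ 0)) :=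
      fun j hj => Measure.isProbabilityMeasure_map (hSmeas _ (hTS n j hj)).aemeasurable
    -- single term ≤ penalizedCost (T n)
    have h1 : lam n i * mmdSq K (Measure.map (T n i) (μ 0)) (μ i)
        ≤ penalizedCost K μ (lam n) (T n) := by
      rw [penalizedCost]
      have hmem : i ∈ Finset.univ \ ({0} : Finset (Fin N)) := by
        simp [Finset.mem_sdiff, hi]
      have hle : lam n i * mmdSq K (Measure.map (T n i) (μ 0)) (μ i)
          ≤ ∑ j ∈ Finset.univ \ {0}, lam n j * mmdSq K (Measure.map (T n j) (μ 0)) (μ j) := by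
        refine Finset.single_le_sum (f := fun j => lam n j * mmdSq K (Measure.map (T n j) (μ 0)) (μ j)) (fun j hj => ?_) hmem
        have hj0 : j ≠ 0 := by
          simp only [Finset.mem_sdiff, Finset.mem_univ, Finset.mem_singleton, true_and] at hj
          exact hj
        have := hprob j hj0
        exact mul_nonneg (hlampos n j hj0).le (hKpos _ _ this inferInstance)
      linarith [aux_transportCost_nonneg (μ 0) (T n)]
    -- penalizedCost (T n) ≤ sInf + eps n ≤ penalizedCost (G n) + eps n
    have hGmem : penalizedCost K μ (lam n) (G n) ∈ {r : ℝ |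
        ∃ T' : Fin N → EuclideanSpace ℝ (Fin d) → EuclideanSpace ℝ (Fin d),
          T' 0 = id ∧ (∀ j, j ≠ 0 → T' j ∈ S) ∧ r = penalizedCost K μ (lam n) T'} :=
      ⟨G n, hG0 n 0 rfl, fun j hj => (hGS n j hj).1, rfl⟩
    have hbdd : BddBelow {r : ℝ |
        ∃ T' : Fin N → EuclideanSpace ℝ (Fin d) → EuclideanSpace ℝ (Fin d),
          T' 0 = id ∧ (∀ j, j ≠ 0 → T' j ∈ S) ∧ r = penalizedCost K μ (lam n) T'} := by
      refine ⟨0, fun r hr => ?_⟩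
      obtain ⟨T', _, hT'S, rfl⟩ := hr
      exact aux_penalizedCost_nonneg hKpos (fun j hj => (hlampos n j hj).le)
        (fun j hj => hSmeas _ (hT'S j hj))
    have h2 := hTopt n
    have h3 : sInf {r : ℝ |
        ∃ T' : Fin N → EuclideanSpace ℝ (Fin d) → EuclideanSpace ℝ (Fin d),
          T' 0 = id ∧ (∀ j, j ≠ 0 → T' j ∈ S) ∧ r = penalizedCost K μ (lam n) T'}
        ≤ penalizedCost K μ (lam n) (G n) := csInf_le hbdd hGmem
    have h4 : eps n ≤ eps 0 := hepsanti (Nat.zero_le n)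
    have h5 := hpenG n
    linarith
  -- squeeze
  have hnonneg : ∀ n, 0 ≤ mmdSq K (Measure.map (T n i) (μ 0)) (μ i) := by
    intro n
    have : IsProbabilityMeasure (Measure.map (T n i) (μ 0)) :=
      Measure.isProbabilityMeasure_map (hSmeas _ (hTS n i hi)).aemeasurable
    exact hKpos _ _ this inferInstance
  have hkey : Tendsto (fun n => mmdSq K (Measure.map (T n i) (μ 0)) (μ i)) atTop (nhds 0) := by
    refine squeeze_zero (g := fun n => (M + N * (2 * CK) + eps 0) / lam n i)
      hnonneg (fun n => ?_) ?_
    · refine (le_div_iff₀ (hlampos n i hi)).mpr ?_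
      have h := hchain n
      have hc : mmdSq K (Measure.map (T n i) (μ 0)) (μ i) * lam n i =
          lam n i * mmdSq K (Measure.map (T n i) (μ 0)) (μ i) := mul_comm _ _
      linarith
    · exact Tendsto.div_atTop tendsto_const_nhds (hlamtop i hi)
  exact hKmetrize _ (μ i)
    (fun n => Measure.isProbabilityMeasure_map (hSmeas _ (hTS n i hi)).aemeasurable)
    inferInstance hkey f
end
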